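/- arXiv:1501.02950 — 11 statements merged into one kernel-verified Lean document; each statement's English description precedes it below -/
import Mathlib

section
/- Let B₀ > 0, S > 0 and let N ≥ 1 be a natural number. Let F : ℕ → ℝ (indexed by k ≥ 1) satisfy 0 ≤ F(k) ≤ B₀S/(2π) for all k, suppose F is summable with ∑_{k=1}^∞ F(k) = N, and suppose k ↦ (2k−1)F(k) is summable. Then ∑_{k=1}^∞ B₀(2k−1)F(k) ≥ 2πN²/S + (B₀²S/(2π))·m·(1−m), where m = Int.fract(2πN/(B₀S)) is the fractional part of 2πN/(B₀S). -/
/-!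
Bathtub principle: among mass distributions `0 ≤ g k ≤ c` of total mass `T` on levels with
nondecreasing energies `e k`, the energy is smallest when the lowest levels are filled up to
the cap. Comparing with the level `M = ⌊T / c⌋` through `(e k - e M) g k ≥ (e k - e M) c`
for `k < M` and `≥ 0` for `k ≥ M` gives the bound for arbitrary `g`. For the Landau levels
`e k = 2k + 1` the filled levels contribute `c M²` because the first `M` odd numbers sum to `M²`,
and the partially filled level `M` contributes `(2M + 1) c m`, `m = {T / c}`.
-/

open Real Finset

theorem sum_range_two_mul_add_one {R : Type*} [CommSemiring R] (M : ℕ) :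
    ∑ k ∈ range M, (2 * (k : R) + 1) = (M : R) ^ 2 := by
  induction M with
  | zero => simp
  | succ n ih => rw [sum_range_succ, ih]; push_cast; ring

theorem Nat.floor_add_fract {R : Type*} [Ring R] [LinearOrder R] [FloorRing R]
    [IsStrictOrderedRing R] {x : R} (hx : 0 ≤ x) : (⌊x⌋₊ : R) + Int.fract x = x := by
  rw [natCast_floor_eq_intCast_floor hx, Int.floor_add_fract]

theorem Monotone.bathtub_le_tsum_mul {e g : ℕ → ℝ} {c : ℝ} (he : Monotone e)
    (hg0 : ∀ k, 0 ≤ g k) (hgc : ∀ k, g k ≤ c) (hg : Summable g)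
    (heg : Summable fun k => e k * g k) (M : ℕ) :
    c * ∑ k ∈ range M, e k + e M * (∑' k, g k - c * M) ≤ ∑' k, e k * g k := by
  have hsub : Summable fun k => (e k - e M) * g k := by
    simpa only [sub_mul] using heg.sub (hg.mul_left (e M))
  have hfilled : ∑ k ∈ range M, (e k - e M) * c ≤ ∑ k ∈ range M, (e k - e M) * g k :=
    sum_le_sum fun k hk =>
      mul_le_mul_of_nonpos_left (hgc k) (sub_nonpos.2 (he (mem_range.1 hk).le))
  have hrest : ∑ k ∈ range M, (e k - e M) * g k ≤ ∑' k, (e k - e M) * g k :=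
    hsub.sum_le_tsum _ fun k hk =>
      mul_nonneg (sub_nonneg.2 (he (not_lt.1 (mem_range.not.1 hk)))) (hg0 k)
  have hshift : ∑' k, (e k - e M) * g k = ∑' k, e k * g k - e M * ∑' k, g k := by
    simp only [sub_mul]
    rw [heg.tsum_sub (hg.mul_left (e M)), tsum_mul_left]
  have hcap : ∑ k ∈ range M, (e k - e M) * c = c * ∑ k ∈ range M, e k - e M * (c * M) := by
    rw [← sum_mul, sum_sub_distrib, sum_const, card_range, nsmul_eq_mul]
    ring
  linarith

theorem magnetic_li_yau_minimization_general
    (B₀ S : ℝ) (hB₀ : 0 < B₀) (hS : 0 < S) (N : ℕ)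
    (F : ℕ → ℝ)
    (hF0 : ∀ k : ℕ, 1 ≤ k → 0 ≤ F k)
    (hFcap : ∀ k : ℕ, 1 ≤ k → F k ≤ B₀ * S / (2 * π))
    (hsum : Summable fun k : ℕ => F (k + 1))
    (htot : ∑' k : ℕ, F (k + 1) = (N : ℝ))
    (hsum2 : Summable fun k : ℕ => (2 * ((k : ℝ) + 1) - 1) * F (k + 1)) :
    2 * π * (N : ℝ) ^ 2 / S
        + B₀ ^ 2 * S / (2 * π) * Int.fract (2 * π * N / (B₀ * S))
          * (1 - Int.fract (2 * π * N / (B₀ * S)))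
      ≤ ∑' k : ℕ, B₀ * (2 * ((k : ℝ) + 1) - 1) * F (k + 1) := by
  set c := B₀ * S / (2 * π)
  set x := 2 * π * N / (B₀ * S)
  set M := ⌊x⌋₊
  have hN : (N : ℝ) = c * (M + Int.fract x) := by
    rw [Nat.floor_add_fract (by positivity)]
    simp only [c, x]
    field_simp
  have hodd : (fun k : ℕ => (2 * ((k : ℝ) + 1) - 1) * F (k + 1))
      = fun k : ℕ => (2 * (k : ℝ) + 1) * F (k + 1) := by
    funext k; ring
  have hbath := Monotone.bathtub_le_tsum_mul (e := fun k : ℕ => 2 * (k : ℝ) + 1)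
    (fun a b hab => by dsimp only; gcongr) (fun k => hF0 (k + 1) k.succ_pos)
    (fun k => hFcap (k + 1) k.succ_pos) hsum (hodd ▸ hsum2) M
  rw [sum_range_two_mul_add_one, htot] at hbath
  calc _ = B₀ * (c * M ^ 2 + (2 * M + 1) * (N - c * M)) := by
        rw [hN]; simp only [c]; field_simp; ring
    _ ≤ B₀ * ∑' k : ℕ, (2 * (k : ℝ) + 1) * F (k + 1) := by gcongr
    _ = _ := by rw [← tsum_mul_left]; exact tsum_congr fun k => by ring

/-- Minimization core of the magnetic Li–Yau inequality (Theorem 3.1):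
`F k` (for `k ≥ 1`) is the mass put on the `k`-th Landau level `B₀(2k-1)`, capped by
`B₀ S / (2π)`, with total mass `N`.  Then the total energy is bounded below by
`2πN²/S + (B₀²S/(2π)) m (1-m)` with `m` the fractional part of `2πN/(B₀S)`. -/
theorem magnetic_li_yau_minimization
    (B₀ S : ℝ) (hB₀ : 0 < B₀) (hS : 0 < S) (N : ℕ) (hN : 1 ≤ N)
    (F : ℕ → ℝ)
    (hF0 : ∀ k : ℕ, 1 ≤ k → 0 ≤ F k)
    (hFcap : ∀ k : ℕ, 1 ≤ k → F k ≤ B₀ * S / (2 * π))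
    (hsum : Summable fun k : ℕ => F (k + 1))
    (htot : ∑' k : ℕ, F (k + 1) = (N : ℝ))
    (hsum2 : Summable fun k : ℕ => (2 * ((k : ℝ) + 1) - 1) * F (k + 1)) :
    2 * π * (N : ℝ) ^ 2 / S
        + B₀ ^ 2 * S / (2 * π) * Int.fract (2 * π * N / (B₀ * S))
          * (1 - Int.fract (2 * π * N / (B₀ * S)))
      ≤ ∑' k : ℕ, B₀ * (2 * ((k : ℝ) + 1) - 1) * F (k + 1) :=
  magnetic_li_yau_minimization_general B₀ S hB₀ hS N F hF0 hFcap hsum htot hsum2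
end

section
/- Let σ ≥ 3/2, S > 0, B₀ > 0, Λ > 0, C ≥ 0, let N be a natural number and μ : Fin N → ℝ. Assume that for every t ≥ 0 one has ∑_{j} (t − μ_j)₊ ≤ S·((t²−B₀²)₊/(8π) + (t−B₀)₊·B₀·C/(4π)). Then ∑_{j} (Λ − μ_j)₊^{σ+1/2} ≤ (Γ(σ+3/2)·Λ^{σ−1/2}·S/(Γ(σ−1/2)·(2σ−1)))·((Λ²−B₀²)₊/(4π) + (Λ−B₀)₊·B₀·C/(2π)). -/
open Real Set intervalIntegral

/-!
The Aizenman–Lieb identity `x₊ ^ γ = γ (γ - 1) ∫₀^∞ t ^ (γ - 2) (x - t)₊ dt` (for `γ > 1`) writes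
each Riesz mean of order `γ` as a superposition of first moments at the lowered levels `Λ - t`.
At `t = 0` the Berezin-type bound vanishes, which forces all `μ j ≥ 0`, so only `t ∈ [0, Λ]`
contributes; there the bound is monotone in the level and hence at most its value at `Λ`.
Integrating `t ^ (γ - 2)` over `[0, Λ]` leaves the factor `γ Λ ^ (γ - 1)`, and for `γ = σ + 1/2`
this is the quotient of Gamma functions in the statement.
-/

lemma integral_rpow_mul_sub {m : ℝ} (hm : -1 < m) {x : ℝ} (hx : 0 ≤ x) :
    ∫ t in (0 : ℝ)..x, t ^ m * (x - t) = x ^ (m + 2) / ((m + 1) * (m + 2)) := by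
  have hm1 : m + 1 ≠ 0 := by linarith
  have hm2 : m + 1 + 1 ≠ 0 := by linarith
  have hexpand : EqOn (fun t => t ^ m * (x - t)) (fun t => x * t ^ m - t ^ (m + 1)) (uIcc 0 x) := by
    intro t ht
    rw [uIcc_of_le hx] at ht
    simp only [rpow_add_one' ht.1 hm1]
    ring
  rw [integral_congr hexpand, integral_sub ((intervalIntegrable_rpow' hm).const_mul x)
      (intervalIntegrable_rpow' (by linarith)), integral_const_mul, integral_rpow (.inl hm),
    integral_rpow (.inl (by linarith)), zero_rpow hm1, zero_rpow hm2,
    show m + 2 = m + 1 + 1 by ring, rpow_add_one' hx hm2]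
  field_simp
  ring

lemma posPart_rpow_eq_integral {m : ℝ} (hm : -1 < m) {x Λ : ℝ} (hxΛ : x ≤ Λ) :
    max x 0 ^ (m + 2) = (m + 1) * (m + 2) * ∫ t in (0 : ℝ)..Λ, t ^ m * max (x - t) 0 := by
  set y := max x 0
  have hy0 : 0 ≤ y := le_max_right x 0
  have hint : ∀ a b, IntervalIntegrable (fun t => t ^ m * max (x - t) 0) MeasureTheory.volume a b :=
    fun a b => (intervalIntegrable_rpow' hm).mul_continuousOn (by fun_prop)
  have hhead : EqOn (fun t => t ^ m * max (x - t) 0) (fun t => t ^ m * (y - t)) (uIcc 0 y) := by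
    intro t ht
    rw [uIcc_of_le hy0] at ht
    have : max (x - t) 0 = y - t := by grind
    simp only [this]
  have htail : EqOn (fun t => t ^ m * max (x - t) 0) (fun _ => 0) (uIcc y Λ) := by
    intro t ht
    have : x ≤ t := by rw [mem_uIcc] at ht; grind
    simp [this]
  rw [← integral_add_adjacent_intervals (hint 0 y) (hint y Λ), integral_congr hhead,
    integral_congr htail, integral_zero, add_zero, integral_rpow_mul_sub hm hy0]
  have hm1 : m + 1 ≠ 0 := by linarith
  have hm2 : m + 2 ≠ 0 := by linarith
  field_simp

open Finset in
theorem sum_posPart_rpow_le_of_sum_posPart_le {ι : Type*} [Fintype ι] {γ Λ K : ℝ} (hγ : 1 < γ)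
    (hΛ : 0 ≤ Λ) {μ : ι → ℝ} (hμ : ∀ j, 0 ≤ μ j)
    (hK : ∀ t ∈ Icc 0 Λ, ∑ j, max (t - μ j) 0 ≤ K) :
    ∑ j, max (Λ - μ j) 0 ^ γ ≤ γ * Λ ^ (γ - 1) * K := by
  obtain ⟨m, rfl⟩ : ∃ m, γ = m + 2 := ⟨γ - 2, by ring⟩
  have hm : -1 < m := by linarith
  have hint (j : ι) :
      IntervalIntegrable (fun t => t ^ m * max (Λ - t - μ j) 0) MeasureTheory.volume 0 Λ :=
    (intervalIntegrable_rpow' hm).mul_continuousOn (by fun_prop)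
  calc ∑ j, max (Λ - μ j) 0 ^ (m + 2)
      = (m + 1) * (m + 2) * ∫ t in (0 : ℝ)..Λ, t ^ m * ∑ j, max (Λ - t - μ j) 0 := by
        simp_rw [sum_congr rfl fun j _ => posPart_rpow_eq_integral hm (sub_le_self Λ (hμ j)),
          sub_right_comm _ (μ _), ← mul_sum, ← integral_finsetSum fun j _ => hint j, mul_sum]
    _ ≤ (m + 1) * (m + 2) * ∫ t in (0 : ℝ)..Λ, t ^ m * K := by
        refine mul_le_mul_of_nonneg_left ?_ (by nlinarith)
        refine integral_mono_on hΛ ((intervalIntegrable_rpow' hm).mul_continuousOn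
          (g := fun t => ∑ j, max (Λ - t - μ j) 0) (by fun_prop))
          ((intervalIntegrable_rpow' hm).mul_const K) fun t ht => ?_
        exact mul_le_mul_of_nonneg_left (hK (Λ - t) ⟨by linarith [ht.2], by linarith [ht.1]⟩)
          (rpow_nonneg ht.1 m)
    _ = (m + 2) * Λ ^ (m + 2 - 1) * K := by
        have hm1 : m + 1 ≠ 0 := by linarith
        rw [integral_mul_const, integral_rpow (.inl hm), zero_rpow hm1, sub_zero,
          show m + 2 - 1 = m + 1 by ring]
        field_simp

lemma le_of_sum_posPart_sub_nonpos {ι : Type*} [Fintype ι] {μ : ι → ℝ} {t : ℝ}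
    (h : ∑ j, max (t - μ j) 0 ≤ 0) (j : ι) : t ≤ μ j := by
  have := Finset.single_le_sum (fun i _ => le_max_right (t - μ i) 0) (Finset.mem_univ j)
  linarith [le_max_left (t - μ j) 0]

noncomputable def berezinBound (S B₀ C t : ℝ) : ℝ :=
  S * (max (t ^ 2 - B₀ ^ 2) 0 / (8 * π) + max (t - B₀) 0 * B₀ * C / (4 * π))

lemma berezinBound_zero (S C : ℝ) {B₀ : ℝ} (hB₀ : 0 ≤ B₀) : berezinBound S B₀ C 0 = 0 := by
  simp [berezinBound, hB₀]

lemma berezinBound_monotoneOn {S B₀ C : ℝ} (hS : 0 ≤ S) (hB₀ : 0 ≤ B₀) (hC : 0 ≤ C) :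
    MonotoneOn (berezinBound S B₀ C) (Ici 0) := by
  intro s (hs : 0 ≤ s) t _ hst
  unfold berezinBound
  gcongr

/-- The Aizenman–Lieb lifting argument of Remark 3.3: from a Berezin-type bound on the first
eigenvalue moment (valid for all `t ≥ 0`) one deduces a bound for the moment of order
`σ + 1/2`.  Here `max x 0` is the positive part and `Real.Gamma` the Gamma function. -/
theorem aizenman_lieb_lifting
    (σ S B₀ Λ C : ℝ) (hσ : 3 / 2 ≤ σ) (hS : 0 < S) (hB₀ : 0 < B₀) (hΛ : 0 < Λ)
    (hC : 0 ≤ C) (N : ℕ) (μ : Fin N → ℝ)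
    (h : ∀ t : ℝ, 0 ≤ t →
      ∑ j, max (t - μ j) 0
        ≤ S * (max (t ^ 2 - B₀ ^ 2) 0 / (8 * π) + max (t - B₀) 0 * B₀ * C / (4 * π))) :
    ∑ j, max (Λ - μ j) 0 ^ (σ + 1 / 2)
      ≤ Real.Gamma (σ + 3 / 2) * Λ ^ (σ - 1 / 2) * S
          / (Real.Gamma (σ - 1 / 2) * (2 * σ - 1))
        * (max (Λ ^ 2 - B₀ ^ 2) 0 / (4 * π) + max (Λ - B₀) 0 * B₀ * C / (2 * π)) := by
  have hμ : ∀ j, 0 ≤ μ j :=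
    le_of_sum_posPart_sub_nonpos ((h 0 le_rfl).trans_eq (berezinBound_zero S C hB₀.le))
  have hK (t : ℝ) (ht : t ∈ Icc 0 Λ) : ∑ j, max (t - μ j) 0 ≤ berezinBound S B₀ C Λ :=
    (h t ht.1).trans (berezinBound_monotoneOn hS.le hB₀.le hC ht.1 hΛ.le ht.2)
  have hconst : Gamma (σ + 3 / 2) * Λ ^ (σ - 1 / 2) * S / (Gamma (σ - 1 / 2) * (2 * σ - 1))
      = (σ + 1 / 2) * Λ ^ (σ - 1 / 2) * S / 2 := by
    have hΓ_ne : Gamma (σ - 1 / 2) ≠ 0 := (Gamma_pos_of_pos (by linarith)).ne'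
    have h2σ : 2 * σ - 1 ≠ 0 := by linarith
    rw [show σ + 3 / 2 = σ - 1 / 2 + 1 + 1 by ring, Gamma_add_one (by linarith),
      Gamma_add_one (by linarith), div_eq_iff (mul_ne_zero hΓ_ne h2σ)]
    ring
  calc ∑ j, max (Λ - μ j) 0 ^ (σ + 1 / 2)
      ≤ (σ + 1 / 2) * Λ ^ (σ + 1 / 2 - 1) * berezinBound S B₀ C Λ :=
        sum_posPart_rpow_le_of_sum_posPart_le (by linarith) hΛ.le hμ hK
    _ = _ := by
        rw [hconst, berezinBound, show σ + 1 / 2 - 1 = σ - 1 / 2 by ring]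
        ring
end

section
/- Let S > 0, s ≥ 0 and α ∈ (0,1). For B₀ > 0 set Λ = B₀(1+α), R₁(B₀) = Λ²S/(8π) − s²Λ/(512πS) − B₀²·(1/2 − {(Λ+B₀)/(2B₀)})²·(S/(2π) − s²/(128πSΛ)) and R₂(B₀) = B₀²·S·α·(1+α)/(4π). Then (R₁(B₀) − R₂(B₀))/B₀² → S·α·(1−α)/(4π) as B₀ → ∞, and R₁(B₀)/R₂(B₀) → 2/(1+α) as B₀ → ∞. -/
open Real Filter

/-- Comparison of Section 3.3 between the Kovařík–Weidl Berezin-type bound `R₁` and the new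
bound `R₂` of Theorem 3.2 in the regime `Λ = B₀(1+α)`, `α ∈ (0,1)`:
`(R₁(B₀) − R₂(B₀))/B₀² → Sα(1−α)/(4π)` and `R₁(B₀)/R₂(B₀) → 2/(1+α)` as `B₀ → ∞`. -/
theorem berezin_bounds_comparison
    (S s α : ℝ) (hS : 0 < S) (hs : 0 ≤ s) (hα : α ∈ Set.Ioo (0 : ℝ) 1)
    (R₁ R₂ : ℝ → ℝ)
    (hR₁ : ∀ B₀ : ℝ, 0 < B₀ →
      R₁ B₀ = (B₀ * (1 + α)) ^ 2 * S / (8 * π)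
        - s ^ 2 * (B₀ * (1 + α)) / (512 * π * S)
        - B₀ ^ 2 * (1 / 2 - Int.fract ((B₀ * (1 + α) + B₀) / (2 * B₀))) ^ 2
            * (S / (2 * π) - s ^ 2 / (128 * π * S * (B₀ * (1 + α)))))
    (hR₂ : ∀ B₀ : ℝ, 0 < B₀ → R₂ B₀ = B₀ ^ 2 * S * α * (1 + α) / (4 * π)) :
    Tendsto (fun B₀ : ℝ => (R₁ B₀ - R₂ B₀) / B₀ ^ 2) atTop
        (nhds (S * α * (1 - α) / (4 * π)))
      ∧ Tendsto (fun B₀ : ℝ => R₁ B₀ / R₂ B₀) atTop (nhds (2 / (1 + α))) := by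
  obtain ⟨hα0, hα1⟩ := hα
  have hπ : (0 : ℝ) < π := Real.pi_pos
  have h1α : (0 : ℝ) < 1 + α := by linarith
  -- the coefficient of the linear term in R₁
  set b : ℝ := - s ^ 2 * (1 + α) / (512 * π * S)
      + (1 - α) ^ 2 * s ^ 2 / (512 * π * S * (1 + α)) with hb
  -- key expansion of R₁ for positive B₀
  have key : ∀ B₀ : ℝ, 0 < B₀ → R₁ B₀ = B₀ ^ 2 * (S * α / (2 * π)) + B₀ * b := by
    intro B₀ hB
    have hfrac : (B₀ * (1 + α) + B₀) / (2 * B₀) = α / 2 + 1 := by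
      field_simp
      ring
    have hfr : Int.fract ((B₀ * (1 + α) + B₀) / (2 * B₀)) = α / 2 := by
      rw [hfrac]
      have : Int.fract (α / 2 + 1) = Int.fract (α / 2) := by
        have := Int.fract_add_intCast (α / 2) 1
        simpa using this
      rw [this, Int.fract_eq_self.mpr ⟨by linarith, by linarith⟩]
    rw [hR₁ B₀ hB, hfr, hb]
    field_simp
    ring
  have hinv : Tendsto (fun B₀ : ℝ => B₀⁻¹) atTop (nhds 0) := tendsto_inv_atTop_zero
  have ev : ∀ᶠ B₀ : ℝ in atTop, 0 < B₀ := eventually_gt_atTop 0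
  constructor
  · have heq : ∀ᶠ B₀ : ℝ in atTop,
        S * α * (1 - α) / (4 * π) + b * B₀⁻¹ = (R₁ B₀ - R₂ B₀) / B₀ ^ 2 := by
      filter_upwards [ev] with B₀ hB
      rw [key B₀ hB, hR₂ B₀ hB]
      have hB2 : B₀ ^ 2 ≠ 0 := by positivity
      field_simp
      ring
    have : Tendsto (fun B₀ : ℝ => S * α * (1 - α) / (4 * π) + b * B₀⁻¹) atTop
        (nhds (S * α * (1 - α) / (4 * π))) := by
      have := (tendsto_const_nhds (x := b).mul hinv)
      simpa using tendsto_const_nhds.add ((tendsto_const_nhds (x := b)).mul hinv)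
    exact this.congr' heq
  · have hD : S * α * (1 + α) / (4 * π) ≠ 0 := by positivity
    have heq : ∀ᶠ B₀ : ℝ in atTop,
        2 / (1 + α) + (b / (S * α * (1 + α) / (4 * π))) * B₀⁻¹ = R₁ B₀ / R₂ B₀ := by
      filter_upwards [ev] with B₀ hB
      rw [key B₀ hB, hR₂ B₀ hB]
      have hB2 : B₀ ≠ 0 := ne_of_gt hB
      field_simp
      ring
    have : Tendsto (fun B₀ : ℝ => 2 / (1 + α) + (b / (S * α * (1 + α) / (4 * π))) * B₀⁻¹)
        atTop (nhds (2 / (1 + α))) := by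
      simpa using tendsto_const_nhds.add (tendsto_const_nhds.mul hinv)
    exact this.congr' heq
end

section
/- Let B₀ > 0, r₀ > 0, m ∈ ℤ and λ ∈ ℝ. Let g : ℝ → ℝ be twice differentiable on (0, B₀r₀²/2), and define u(r) = r^{|m|}·exp(−B₀r²/4)·g(B₀r²/2) for r ∈ (0, r₀). Then for each r ∈ (0, r₀) the eigenvalue equation −u''(r) − u'(r)/r + (m²/r² + B₀²r²/4)·u(r) = λ·u(r) holds if and only if, with s = B₀r²/2, one has s·g''(s) + (|m|+1 − s)·g'(s) − (((|m|+1)B₀ − λ)/(2B₀))·g(s) = 0. -/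
/-!
Write the Ansatz as `u = w · (g ∘ s)` with `w r = r^|m| e^{-B₀r²/4}` and `s r = B₀r²/2`. Then
`w' = (|m|/r - B₀r/2) w` and `(g ∘ s)' = B₀ r · g' ∘ s`, so after two differentiations every term
of the radial equation carries the factor `w r`. Collecting terms, the radial expression minus
`λ u` equals `-2B₀ w(r)` times Kummer's expression at `s r`, and `w r ≠ 0` for `r > 0`.
-/

open Real Filter Topology

theorem deriv_deriv_eq_of_eventually_hasDerivAt {𝕜 F : Type*} [NontriviallyNormedField 𝕜]
    [NormedAddCommGroup F] [NormedSpace 𝕜 F] {f f' : 𝕜 → F} {f'' : F} {x : 𝕜}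
    (hf : ∀ᶠ y in 𝓝 x, HasDerivAt f (f' y) y) (hf' : HasDerivAt f' f'' x) :
    deriv (deriv f) x = f'' := by
  rw [EventuallyEq.deriv_eq (hf.mono fun _ hy => hy.deriv)]
  exact hf'.deriv

section Ansatz

variable {B x : ℝ} {n : ℕ}

theorem hasDerivAt_pow_mul_exp_neg_sq (hx : x ≠ 0) :
    HasDerivAt (fun y => y ^ n * exp (-B * y ^ 2 / 4))
      ((n / x - B * x / 2) * (x ^ n * exp (-B * x ^ 2 / 4))) x := by
  have hexp : HasDerivAt (fun y => exp (-B * y ^ 2 / 4))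
      (exp (-B * x ^ 2 / 4) * (-B * (2 * x) / 4)) x := by
    simpa using (((hasDerivAt_pow 2 x).const_mul (-B)).div_const 4).exp
  refine ((hasDerivAt_pow n x).mul hexp).congr_deriv ?_
  rcases n with _ | k
  · simp; ring
  · rw [Nat.add_sub_cancel]
    field_simp
    ring

theorem HasDerivAt.comp_half_mul_sq {g : ℝ → ℝ} {d : ℝ} (hg : HasDerivAt g d (B * x ^ 2 / 2)) :
    HasDerivAt (fun y => g (B * y ^ 2 / 2)) (B * x * d) x := by
  have hs : HasDerivAt (fun y => B * y ^ 2 / 2) (B * x) x := by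
    refine (((hasDerivAt_pow 2 x).const_mul B).div_const 2).congr_deriv ?_
    push_cast; ring
  exact (hg.comp x hs).congr_deriv (mul_comm _ _)

theorem hasDerivAt_pow_mul_exp_neg_sq_mul_comp {g : ℝ → ℝ} {d : ℝ} (hx : x ≠ 0)
    (hg : HasDerivAt g d (B * x ^ 2 / 2)) :
    HasDerivAt (fun y => y ^ n * exp (-B * y ^ 2 / 4) * g (B * y ^ 2 / 2))
      (x ^ n * exp (-B * x ^ 2 / 4) * ((n / x - B * x / 2) * g (B * x ^ 2 / 2) + B * x * d)) x :=
  ((hasDerivAt_pow_mul_exp_neg_sq hx).mul hg.comp_half_mul_sq).congr_deriv (by ring)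

theorem hasDerivAt_pow_mul_exp_neg_sq_mul_comp_deriv {g g' : ℝ → ℝ} {d : ℝ} (hx : x ≠ 0)
    (hg : HasDerivAt g (g' (B * x ^ 2 / 2)) (B * x ^ 2 / 2))
    (hg' : HasDerivAt g' d (B * x ^ 2 / 2)) :
    HasDerivAt (fun y => y ^ n * exp (-B * y ^ 2 / 4) *
        ((n / y - B * y / 2) * g (B * y ^ 2 / 2) + B * y * g' (B * y ^ 2 / 2)))
      (x ^ n * exp (-B * x ^ 2 / 4) *
        ((n / x - B * x / 2) * ((n / x - B * x / 2) * g (B * x ^ 2 / 2) + B * x * g' (B * x ^ 2 / 2))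
          + (-n / x ^ 2 - B / 2) * g (B * x ^ 2 / 2)
          + (n / x - B * x / 2) * (B * x * g' (B * x ^ 2 / 2))
          + B * g' (B * x ^ 2 / 2) + B * x * (B * x * d))) x := by
  have hcoef : HasDerivAt (fun y => n / y - B * y / 2) (-n / x ^ 2 - B / 2) x :=
    (((hasDerivAt_const x (n : ℝ)).div (hasDerivAt_id x) hx).sub
      (((hasDerivAt_id x).const_mul B).div_const 2)).congr_deriv (by simp)
  have hlin : HasDerivAt (fun y => B * y) B x := by simpa using (hasDerivAt_id x).const_mul B
  refine ((hasDerivAt_pow_mul_exp_neg_sq hx).mul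
    ((hcoef.mul hg.comp_half_mul_sq).add (hlin.mul hg'.comp_half_mul_sq))).congr_deriv ?_
  simp only [Pi.add_apply, Pi.mul_apply]
  ring

theorem radial_expr_ansatz_eq_mul_kummer (hx : x ≠ 0) (hB : B ≠ 0) (lam w G G₁ G₂ : ℝ) :
    -(w * ((n / x - B * x / 2) * ((n / x - B * x / 2) * G + B * x * G₁)
          + (-n / x ^ 2 - B / 2) * G + (n / x - B * x / 2) * (B * x * G₁)
          + B * G₁ + B * x * (B * x * G₂)))
      - w * ((n / x - B * x / 2) * G + B * x * G₁) / x
      + ((n : ℝ) ^ 2 / x ^ 2 + B ^ 2 * x ^ 2 / 4) * (w * G) - lam * (w * G)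
      = -2 * B * w * (B * x ^ 2 / 2 * G₂ + ((n : ℝ) + 1 - B * x ^ 2 / 2) * G₁
          - (((n : ℝ) + 1) * B - lam) / (2 * B) * G) := by
  field_simp
  ring

end Ansatz

theorem disc_eigenvalue_equation_to_kummer_general
    (B₀ r₀ : ℝ) (hB₀ : 0 < B₀) (m : ℤ) (lam : ℝ)
    (g g' g'' : ℝ → ℝ)
    (hg : ∀ s ∈ Set.Ioo 0 (B₀ * r₀ ^ 2 / 2), HasDerivAt g (g' s) s)
    (hg' : ∀ s ∈ Set.Ioo 0 (B₀ * r₀ ^ 2 / 2), HasDerivAt g' (g'' s) s)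
    (u : ℝ → ℝ)
    (hu : u = fun r => r ^ m.natAbs * Real.exp (-B₀ * r ^ 2 / 4) * g (B₀ * r ^ 2 / 2)) :
    ∀ r ∈ Set.Ioo 0 r₀,
      (-(deriv (deriv u) r) - deriv u r / r
          + ((m : ℝ) ^ 2 / r ^ 2 + B₀ ^ 2 * r ^ 2 / 4) * u r = lam * u r
        ↔ B₀ * r ^ 2 / 2 * g'' (B₀ * r ^ 2 / 2)
            + ((m.natAbs : ℝ) + 1 - B₀ * r ^ 2 / 2) * g' (B₀ * r ^ 2 / 2)
            - ((((m.natAbs : ℝ) + 1) * B₀ - lam) / (2 * B₀)) * g (B₀ * r ^ 2 / 2) = 0) := by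
  intro r hr
  subst hu
  have hs : ∀ x ∈ Set.Ioo 0 r₀, B₀ * x ^ 2 / 2 ∈ Set.Ioo 0 (B₀ * r₀ ^ 2 / 2) := fun x hx =>
    ⟨by have := hx.1; positivity, by have := hx.1; have := hx.2; gcongr⟩
  have hderiv : ∀ᶠ x in 𝓝 r, HasDerivAt _ _ x :=
    Filter.eventually_of_mem (Ioo_mem_nhds hr.1 hr.2) fun x hx =>
      hasDerivAt_pow_mul_exp_neg_sq_mul_comp (n := m.natAbs) hx.1.ne' (hg _ (hs x hx))
  have hm_sq : (m : ℝ) ^ 2 = (m.natAbs : ℝ) ^ 2 := by simp [Nat.cast_natAbs, sq_abs]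
  have hw : r ^ m.natAbs * exp (-B₀ * r ^ 2 / 4) ≠ 0 := by have := hr.1; positivity
  rw [deriv_deriv_eq_of_eventually_hasDerivAt hderiv (hasDerivAt_pow_mul_exp_neg_sq_mul_comp_deriv
      hr.1.ne' (hg _ (hs r hr)) (hg' _ (hs r hr))), hderiv.self_of_nhds.deriv, hm_sq, ← sub_eq_zero,
    radial_expr_ansatz_eq_mul_kummer hr.1.ne' hB₀.ne', mul_eq_zero,
    or_iff_right (mul_ne_zero (by simp [hB₀.ne']) hw)]

/-- Core computation of Theorem 4.1: with the Ansatz `u(r) = r^{|m|} e^{−B₀r²/4} g(B₀r²/2)`,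
the radial eigenvalue equation for `h̃_m = −d²/dr² − (1/r)d/dr + m²/r² + B₀²r²/4` on
`(0, r₀)` is equivalent to Kummer's equation for `g` with parameters
`a = ((|m|+1)B₀ − λ)/(2B₀)` and `b = |m|+1`, evaluated at `s = B₀r²/2`. -/
theorem disc_eigenvalue_equation_to_kummer
    (B₀ r₀ : ℝ) (hB₀ : 0 < B₀) (hr₀ : 0 < r₀) (m : ℤ) (lam : ℝ)
    (g g' g'' : ℝ → ℝ)
    (hg : ∀ s ∈ Set.Ioo 0 (B₀ * r₀ ^ 2 / 2), HasDerivAt g (g' s) s)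
    (hg' : ∀ s ∈ Set.Ioo 0 (B₀ * r₀ ^ 2 / 2), HasDerivAt g' (g'' s) s)
    (u : ℝ → ℝ)
    (hu : u = fun r => r ^ m.natAbs * Real.exp (-B₀ * r ^ 2 / 4) * g (B₀ * r ^ 2 / 2)) :
    ∀ r ∈ Set.Ioo 0 r₀,
      (-(deriv (deriv u) r) - deriv u r / r
          + ((m : ℝ) ^ 2 / r ^ 2 + B₀ ^ 2 * r ^ 2 / 4) * u r = lam * u r
        ↔ B₀ * r ^ 2 / 2 * g'' (B₀ * r ^ 2 / 2)
            + ((m.natAbs : ℝ) + 1 - B₀ * r ^ 2 / 2) * g' (B₀ * r ^ 2 / 2)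
            - ((((m.natAbs : ℝ) + 1) * B₀ - lam) / (2 * B₀)) * g (B₀ * r ^ 2 / 2) = 0) :=
  disc_eigenvalue_equation_to_kummer_general B₀ r₀ hB₀ m lam g g' g'' hg hg' u hu
end

section
/- Let B₀ > 0, ω ≥ 0 and let g : (0,∞) → ℝ be a nonnegative measurable function with s ↦ s·g(s) integrable on (0,∞). Set G(r) = ω·∫₀^r g(s)·s ds, α = ω·∫₀^∞ g(s)·s ds, a₀(r) = B₀r/2, a(r) = B₀r/2 − G(r)/r, and V_k(r) = (2k/r)(a₀(r) − a(r)) + a(r)² − a₀(r)². Then for every integer k ≥ 0 and every r > 0: (V_k(r))₋ ≤ (2k/r²)·ω·∫_r^∞ g(s)·s ds + α·(B₀ − 2k/r²)₊, where x₊ = max(x,0) and x₋ = max(−x,0). -/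
open Real MeasureTheory

/-- Estimate (vk-neg) of Section 7: the negative part of the effective perturbing potential
`V_k` in the `k`-th angular-momentum channel of the magnetic Laplacian with field
`B₀ − ω·g(|x|)` is bounded by `(2k/r²)ω∫_r^∞ g(s)s ds + α(B₀ − 2k/r²)₊`. -/
theorem perturbing_potential_negative_part_bound
    (B₀ ω : ℝ) (hB₀ : 0 < B₀) (hω : 0 ≤ ω) (g : ℝ → ℝ) (hgmeas : Measurable g)
    (hgnn : ∀ s : ℝ, 0 < s → 0 ≤ g s)
    (hint : IntegrableOn (fun s => g s * s) (Set.Ioi 0))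
    (G : ℝ → ℝ) (hG : ∀ r, G r = ω * ∫ s in Set.Ioc (0 : ℝ) r, g s * s)
    (α : ℝ) (hα : α = ω * ∫ s in Set.Ioi (0 : ℝ), g s * s)
    (a₀ a : ℝ → ℝ) (ha₀ : ∀ r, a₀ r = B₀ * r / 2)
    (ha : ∀ r, a r = B₀ * r / 2 - G r / r)
    (V : ℕ → ℝ → ℝ)
    (hV : ∀ (k : ℕ) (r : ℝ), V k r = 2 * k / r * (a₀ r - a r) + a r ^ 2 - a₀ r ^ 2) :
    ∀ (k : ℕ) (r : ℝ), 0 < r →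
      max (-V k r) 0
        ≤ 2 * k / r ^ 2 * ω * (∫ s in Set.Ioi r, g s * s)
          + α * max (B₀ - 2 * k / r ^ 2) 0 := by
  intro k r hr
  have hnn : ∀ᵐ s ∂(volume.restrict (Set.Ioi (0:ℝ))), 0 ≤ g s * s := by
    filter_upwards [ae_restrict_mem measurableSet_Ioi] with s hs
    exact mul_nonneg (hgnn s hs) hs.le
  have hnnr : ∀ᵐ s ∂(volume.restrict (Set.Ioi r)), 0 ≤ g s * s := by
    filter_upwards [ae_restrict_mem measurableSet_Ioi] with s hs
    exact mul_nonneg (hgnn s (hr.trans hs)) (hr.trans hs).le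
  have hIr : 0 ≤ ∫ s in Set.Ioi r, g s * s := integral_nonneg_of_ae hnnr
  have hGnn : 0 ≤ G r := by
    rw [hG]
    apply mul_nonneg hω
    apply integral_nonneg_of_ae
    filter_upwards [ae_restrict_mem measurableSet_Ioc] with s hs
    exact mul_nonneg (hgnn s hs.1) hs.1.le
  have hGle : G r ≤ α := by
    rw [hG, hα]
    apply mul_le_mul_of_nonneg_left _ hω
    exact setIntegral_mono_set hint hnn (HasSubset.Subset.eventuallyLE Set.Ioc_subset_Ioi_self)
  have hαnn : 0 ≤ α := hGnn.trans hGle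
  have hmax : 0 ≤ max (B₀ - 2 * k / r ^ 2) 0 := le_max_right _ _
  have hknn : (0:ℝ) ≤ 2 * k / r ^ 2 := by positivity
  have key : -V k r ≤ α * max (B₀ - 2 * k / r ^ 2) 0 := by
    have h1 : -V k r ≤ G r * (B₀ - 2 * k / r ^ 2) := by
      have hid : V k r = G r * (2 * k / r ^ 2 - B₀) + (G r / r) ^ 2 := by
        rw [hV, ha, ha₀]
        have hr0 : r ≠ 0 := hr.ne'
        field_simp
        ring
      have := sq_nonneg (G r / r)
      nlinarith
    calc -V k r ≤ G r * (B₀ - 2 * k / r ^ 2) := h1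
      _ ≤ G r * max (B₀ - 2 * k / r ^ 2) 0 :=
        mul_le_mul_of_nonneg_left (le_max_left _ _) hGnn
      _ ≤ α * max (B₀ - 2 * k / r ^ 2) 0 :=
        mul_le_mul_of_nonneg_right hGle hmax
  have hrhs1 : 0 ≤ 2 * k / r ^ 2 * ω * (∫ s in Set.Ioi r, g s * s) := by positivity
  rcases max_cases (-V k r) 0 with ⟨h, _⟩ | ⟨h, _⟩ <;> rw [h]
  · linarith
  · positivity
end

section
/- Let B₀ > 0, ω ≥ 0 and let g : (0,∞) → ℝ be a nonnegative measurable function with s ↦ s·g(s) integrable on (0,∞) and ω·g(s) ≤ B₀ for all s > 0. Set G(r) = ω·∫₀^r g(s)·s ds, α = ω·∫₀^∞ g(s)·s ds, a₀(r) = B₀r/2, a(r) = B₀r/2 − G(r)/r, and V_k(r) = (2k/r)(a₀(r) − a(r)) + a(r)² − a₀(r)². Then for every integer k < 0 and every r > 0: V_k(r) ≥ k·B₀ − α·B₀. -/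
open Real MeasureTheory

/-- Lower bound for the perturbing potential in negative angular-momentum channels used in
the proof of Theorem 6.1: under `ω·g ≤ B₀`, for every integer `k < 0` and `r > 0` one has
`V_k(r) ≥ kB₀ − αB₀`. -/
theorem perturbing_potential_negative_channels_bound
    (B₀ ω : ℝ) (hB₀ : 0 < B₀) (hω : 0 ≤ ω) (g : ℝ → ℝ) (hgmeas : Measurable g)
    (hgnn : ∀ s : ℝ, 0 < s → 0 ≤ g s)
    (hgB : ∀ s : ℝ, 0 < s → ω * g s ≤ B₀)
    (hint : IntegrableOn (fun s => g s * s) (Set.Ioi 0))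
    (G : ℝ → ℝ) (hG : ∀ r, G r = ω * ∫ s in Set.Ioc (0 : ℝ) r, g s * s)
    (α : ℝ) (hα : α = ω * ∫ s in Set.Ioi (0 : ℝ), g s * s)
    (a₀ a : ℝ → ℝ) (ha₀ : ∀ r, a₀ r = B₀ * r / 2)
    (ha : ∀ r, a r = B₀ * r / 2 - G r / r)
    (V : ℤ → ℝ → ℝ)
    (hV : ∀ (k : ℤ) (r : ℝ), V k r = 2 * k / r * (a₀ r - a r) + a r ^ 2 - a₀ r ^ 2) :
    ∀ (k : ℤ) (r : ℝ), k < 0 → 0 < r → (k : ℝ) * B₀ - α * B₀ ≤ V k r := by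
  intro k r hk hr
  have hsub : Set.Ioc (0:ℝ) r ⊆ Set.Ioi 0 := Set.Ioc_subset_Ioi_self
  have hintc : IntegrableOn (fun s => g s * s) (Set.Ioc 0 r) := hint.mono_set hsub
  -- 0 ≤ G r
  have hGnn : 0 ≤ G r := by
    rw [hG]
    apply mul_nonneg hω
    apply setIntegral_nonneg measurableSet_Ioc
    intro s hs
    exact mul_nonneg (hgnn s hs.1) (le_of_lt hs.1)
  -- G r ≤ α
  have hGα : G r ≤ α := by
    rw [hG, hα]
    apply mul_le_mul_of_nonneg_left _ hω
    apply setIntegral_mono_set hint _ (Filter.Eventually.of_forall hsub)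
    filter_upwards [self_mem_ae_restrict measurableSet_Ioi] with s hs
    exact mul_nonneg (hgnn s hs) (le_of_lt hs)
  -- G r ≤ B₀ * r^2 / 2
  have hGB : G r ≤ B₀ * r ^ 2 / 2 := by
    have h1 : ω * ∫ s in Set.Ioc (0:ℝ) r, g s * s
        = ∫ s in Set.Ioc (0:ℝ) r, ω * (g s * s) := by
      rw [integral_const_mul]
    have h2 : (∫ s in Set.Ioc (0:ℝ) r, ω * (g s * s))
        ≤ ∫ s in Set.Ioc (0:ℝ) r, B₀ * s := by
      apply setIntegral_mono_on (hintc.const_mul ω) _ measurableSet_Ioc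
      · intro s hs
        have := hgB s hs.1
        calc ω * (g s * s) = (ω * g s) * s := by ring
          _ ≤ B₀ * s := mul_le_mul_of_nonneg_right this (le_of_lt hs.1)
      · exact (continuous_const.mul continuous_id).integrableOn_Ioc
    have h3 : (∫ s in Set.Ioc (0:ℝ) r, B₀ * s) = B₀ * r ^ 2 / 2 := by
      rw [← intervalIntegral.integral_of_le (le_of_lt hr),
        intervalIntegral.integral_const_mul, integral_id]
      ring
    rw [hG, h1]
    exact h2.trans_eq h3
  -- rewrite V
  have hne : r ≠ 0 := ne_of_gt hr
  have hVeq : V k r = 2 * k * G r / r ^ 2 + G r ^ 2 / r ^ 2 - B₀ * G r := by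
    rw [hV, ha, ha₀]
    field_simp
    ring
  rw [hVeq]
  have hknn : (k:ℝ) < 0 := by exact_mod_cast hk
  have t1 : (k:ℝ) * B₀ ≤ 2 * k * G r / r ^ 2 := by
    rw [le_div_iff₀ (by positivity : (0:ℝ) < r ^ 2)]
    have h2G : 2 * G r ≤ B₀ * r ^ 2 := by linarith
    have := mul_le_mul_of_nonpos_left h2G (le_of_lt hknn)
    nlinarith
  have t2 : 0 ≤ G r ^ 2 / r ^ 2 := by positivity
  have t3 : B₀ * G r ≤ B₀ * α := mul_le_mul_of_nonneg_left hGα (le_of_lt hB₀)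
  nlinarith
end

section
/- Let B₀ > 0, ω ≥ 0 and let g : (0,∞) → ℝ be a nonnegative measurable function with s ↦ s·g(s) integrable on (0,∞). Set G(r) = ω·∫₀^r g(s)·s ds, α = ω·∫₀^∞ g(s)·s ds, a₀(r) = B₀r/2, a(r) = B₀r/2 − G(r)/r, V_k(r) = (2k/r)(a₀(r) − a(r)) + a(r)² − a₀(r)², and ψ_k(r) = √(B₀/Γ(k+1))·(B₀/2)^{k/2}·r^k·exp(−B₀r²/4). Then for every integer k ≥ 1: ∫₀^∞ ψ_k(r)²·(V_k(r))₋·r dr ≤ λ_k + α·B₀/√(2πk), where λ_k = 2kω·∫₀^∞ ψ_k(r)²·(∫_r^∞ g(s)·s ds)·r^{−1} dr and x₋ = max(−x,0). -/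
open Real MeasureTheory Set Filter Topology

/-!
With `G` the flux through the disc of radius `r`, the potential is `V_k = 2kG/r² - B₀G + G²/r²`,
so `(V_k)₋ ≤ G (B₀ - 2k/r²)₊ ≤ α (B₀ - 2k/r²)₊` because `0 ≤ G ≤ α`. For `h(r) = r^{2k} e^{-B₀r²/2}`
one has `ψ_k² (B₀ - 2k/r²)₊ r ∝ (-h')₊`, and `h` increases up to `√(2k/B₀)` and decreases after,
so the integral of `(-h')₊` is the peak value of `h`. Stirling's bound `k! ≥ √(2πk) (k/e)^k`
turns the normalized peak into `B₀/√(2πk)`, and `λ_k ≥ 0`.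
-/

theorem sqrt_lt_iff_sub_div_sq_pos {b c r : ℝ} (hb : 0 < b) (hr : 0 < r) :
    √(c / b) < r ↔ 0 < b - c / r ^ 2 := by
  rw [sub_pos, div_lt_iff₀ (by positivity), ← div_lt_iff₀' hb, sqrt_lt' hr]

section GaussianMoment

variable {b : ℝ} {k : ℕ}

theorem hasDerivAt_pow_mul_exp_neg_mul_sq {x : ℝ} (hx : x ≠ 0) :
    HasDerivAt (fun r => r ^ (2 * k) * exp (-b * r ^ 2 / 2))
      (-(x ^ (2 * k) * exp (-b * x ^ 2 / 2) * (b - 2 * k / x ^ 2) * x)) x := by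
  have hgauss : HasDerivAt (fun r => -b * r ^ 2 / 2) (-b * x) x :=
    (((hasDerivAt_pow 2 x).const_mul (-b)).div_const 2).congr_deriv (by ring)
  have hpow : (2 * k : ℕ) * x ^ (2 * k - 1) = 2 * k * x ^ (2 * k) / x := by
    rw [eq_div_iff hx]
    rcases k with _ | k
    · simp
    · push_cast
      rw [mul_assoc, ← pow_succ, Nat.sub_add_cancel (by omega)]
  refine ((hasDerivAt_pow (2 * k) x).mul hgauss.exp).congr_deriv ?_
  rw [hpow]
  field_simp
  ring

theorem tendsto_pow_mul_exp_neg_mul_sq_atTop (hb : 0 < b) :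
    Tendsto (fun r => r ^ (2 * k) * exp (-b * r ^ 2 / 2)) atTop (𝓝 0) := by
  have hsq : Tendsto (fun r : ℝ => b * r ^ 2 / 2) atTop atTop :=
    ((tendsto_pow_atTop two_ne_zero).const_mul_atTop hb).atTop_div_const two_pos
  have hlim := ((tendsto_pow_mul_exp_neg_atTop_nhds_zero k).comp hsq).const_mul ((2 / b) ^ k)
  rw [mul_zero] at hlim
  refine hlim.congr fun r => ?_
  rw [Function.comp_apply, ← mul_assoc, ← mul_pow, pow_mul, neg_mul, neg_div,
    show 2 / b * (b * r ^ 2 / 2) = r ^ 2 by field_simp]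

theorem eqOn_pow_mul_exp_mul_max_indicator (hb : 0 < b) :
    EqOn (fun r => r ^ (2 * k) * exp (-b * r ^ 2 / 2) * max (b - 2 * k / r ^ 2) 0 * r)
      ((Ioi √(2 * k / b)).indicator
        fun r => r ^ (2 * k) * exp (-b * r ^ 2 / 2) * (b - 2 * k / r ^ 2) * r) (Ioi 0) := by
  intro r hr
  dsimp only
  by_cases hlt : r ∈ Ioi √(2 * k / b)
  · rw [indicator_of_mem hlt, max_eq_left ((sqrt_lt_iff_sub_div_sq_pos hb hr).1 hlt).le]
  · rw [indicator_of_notMem hlt,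
      max_eq_right (not_lt.1 (mt (sqrt_lt_iff_sub_div_sq_pos hb hr).2 hlt))]
    simp

theorem pow_mul_exp_mul_nonneg_of_sqrt_lt (hb : 0 < b) {x : ℝ} (hx : √(2 * k / b) < x) :
    0 ≤ x ^ (2 * k) * exp (-b * x ^ 2 / 2) * (b - 2 * k / x ^ 2) * x := by
  have hx0 : 0 < x := (sqrt_nonneg _).trans_lt hx
  have hsign := (sqrt_lt_iff_sub_div_sq_pos hb hx0).1 hx
  positivity

theorem integrableOn_Ioi_sqrt_pow_mul_exp_mul (hb : 0 < b) :
    IntegrableOn (fun r => r ^ (2 * k) * exp (-b * r ^ 2 / 2) * (b - 2 * k / r ^ 2) * r)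
      (Ioi √(2 * k / b)) := by
  simpa using (integrableOn_Ioi_deriv_of_nonpos (Continuous.continuousWithinAt (by fun_prop))
    (fun x hx => hasDerivAt_pow_mul_exp_neg_mul_sq ((sqrt_nonneg _).trans_lt hx).ne')
    (fun x hx => neg_nonpos.2 (pow_mul_exp_mul_nonneg_of_sqrt_lt hb hx))
    (tendsto_pow_mul_exp_neg_mul_sq_atTop hb)).neg

theorem integral_Ioi_sqrt_pow_mul_exp_mul (hb : 0 < b) :
    ∫ r in Ioi √(2 * k / b), r ^ (2 * k) * exp (-b * r ^ 2 / 2) * (b - 2 * k / r ^ 2) * r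
      = (2 * k / b) ^ k * exp (-k) := by
  have hftc := integral_Ioi_of_hasDerivAt_of_nonpos (Continuous.continuousWithinAt (by fun_prop))
    (fun x hx => hasDerivAt_pow_mul_exp_neg_mul_sq ((sqrt_nonneg _).trans_lt hx).ne')
    (fun x hx => neg_nonpos.2 (pow_mul_exp_mul_nonneg_of_sqrt_lt hb hx))
    (tendsto_pow_mul_exp_neg_mul_sq_atTop (k := k) hb)
  rw [integral_neg, zero_sub, neg_inj] at hftc
  rw [hftc, pow_mul, sq_sqrt (by positivity)]
  congr 2
  field_simp

theorem integrableOn_pow_mul_exp_mul_max (hb : 0 < b) :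
    IntegrableOn (fun r => r ^ (2 * k) * exp (-b * r ^ 2 / 2) * max (b - 2 * k / r ^ 2) 0 * r)
      (Ioi 0) := by
  refine IntegrableOn.congr_fun ?_ (eqOn_pow_mul_exp_mul_max_indicator hb).symm measurableSet_Ioi
  rw [IntegrableOn, integrable_indicator_iff measurableSet_Ioi, IntegrableOn,
    Measure.restrict_restrict measurableSet_Ioi,
    inter_eq_self_of_subset_left (Ioi_subset_Ioi (sqrt_nonneg _))]
  exact integrableOn_Ioi_sqrt_pow_mul_exp_mul hb

theorem integral_pow_mul_exp_mul_max (hb : 0 < b) :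
    ∫ r in Ioi 0, r ^ (2 * k) * exp (-b * r ^ 2 / 2) * max (b - 2 * k / r ^ 2) 0 * r
      = (2 * k / b) ^ k * exp (-k) := by
  rw [setIntegral_congr_fun measurableSet_Ioi (eqOn_pow_mul_exp_mul_max_indicator hb),
    setIntegral_indicator measurableSet_Ioi,
    inter_eq_self_of_subset_right (Ioi_subset_Ioi (sqrt_nonneg _)),
    integral_Ioi_sqrt_pow_mul_exp_mul hb]

end GaussianMoment

theorem landau_ground_state_sq {B : ℝ} (hB : 0 ≤ B) (k : ℕ) (r : ℝ) :
    (√(B / Gamma ((k : ℝ) + 1)) * (B / 2) ^ ((k : ℝ) / 2) * r ^ k * exp (-B * r ^ 2 / 4)) ^ 2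
      = B / k.factorial * (B / 2) ^ k * (r ^ (2 * k) * exp (-B * r ^ 2 / 2)) := by
  rw [Gamma_nat_eq_factorial, mul_pow, mul_pow, mul_pow, sq_sqrt (by positivity),
    ← rpow_natCast _ 2, ← rpow_mul (by positivity), ← pow_mul, ← exp_nat_mul]
  norm_num
  ring_nf

theorem landau_ground_state_peak_le {B : ℝ} (hB : 0 < B) {k : ℕ} (hk : k ≠ 0) :
    B / k.factorial * (B / 2) ^ k * ((2 * k / B) ^ k * exp (-k)) ≤ B / √(2 * π * k) := by
  have hstirling := Stirling.le_factorial_stirling k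
  have hpeak : B / k.factorial * (B / 2) ^ k * ((2 * k / B) ^ k * exp (-k))
      = B * (k / exp 1) ^ k / k.factorial := by
    have hpow : (B / 2) ^ k * (2 * k / B) ^ k = (k : ℝ) ^ k := by
      rw [← mul_pow]
      field_simp
    rw [div_pow _ (exp 1), ← exp_nat_mul, mul_one, exp_neg, ← hpow]
    ring
  rw [hpeak, div_le_div_iff₀ (by positivity) (by positivity), mul_assoc]
  exact mul_le_mul_of_nonneg_left (by linarith) hB.le

theorem max_neg_potential_le {G α B c r : ℝ} (hG : 0 ≤ G) (hGα : G ≤ α) (hr : r ≠ 0) :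
    max (-(2 * c / r * (B * r / 2 - (B * r / 2 - G / r)) + (B * r / 2 - G / r) ^ 2
      - (B * r / 2) ^ 2)) 0 ≤ α * max (B - 2 * c / r ^ 2) 0 := by
  have hV : -(2 * c / r * (B * r / 2 - (B * r / 2 - G / r)) + (B * r / 2 - G / r) ^ 2
      - (B * r / 2) ^ 2) = G * (B - 2 * c / r ^ 2) - (G / r) ^ 2 := by
    field_simp
    ring
  rw [hV]
  refine max_le ?_ (mul_nonneg (hG.trans hGα) (le_max_right _ _))
  calc G * (B - 2 * c / r ^ 2) - (G / r) ^ 2 ≤ G * (B - 2 * c / r ^ 2) := sub_le_self _ (sq_nonneg _)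
    _ ≤ G * max (B - 2 * c / r ^ 2) 0 := mul_le_mul_of_nonneg_left (le_max_left _ _) hG
    _ ≤ α * max (B - 2 * c / r ^ 2) 0 := mul_le_mul_of_nonneg_right hGα (le_max_right _ _)

theorem setIntegral_Ioc_mem_Icc {f : ℝ → ℝ} (hf : ∀ s, 0 < s → 0 ≤ f s)
    (hint : IntegrableOn f (Ioi 0)) (r : ℝ) :
    ∫ s in Ioc 0 r, f s ∈ Icc 0 (∫ s in Ioi 0, f s) :=
  ⟨setIntegral_nonneg measurableSet_Ioc fun s hs => hf s hs.1,
    setIntegral_mono_set hint ((ae_restrict_mem measurableSet_Ioi).mono fun s hs => hf s hs)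
      Ioc_subset_Ioi_self.eventuallyLE⟩

theorem setIntegral_sq_mul_integral_Ioi_mul_inv_nonneg {f : ℝ → ℝ}
    (hf : ∀ s, 0 < s → 0 ≤ f s) (φ : ℝ → ℝ) :
    0 ≤ ∫ r in Ioi 0, φ r ^ 2 * (∫ s in Ioi r, f s) * r⁻¹ := by
  refine setIntegral_nonneg measurableSet_Ioi fun r (hr : 0 < r) => ?_
  have htail : 0 ≤ ∫ s in Ioi r, f s :=
    setIntegral_nonneg measurableSet_Ioi fun s (hs : r < s) => hf s (hr.trans hs)
  positivity

theorem lambda_k_upper_bound_general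
    (B₀ ω : ℝ) (hB₀ : 0 < B₀) (hω : 0 ≤ ω) (g : ℝ → ℝ)
    (hgnn : ∀ s : ℝ, 0 < s → 0 ≤ g s)
    (hint : IntegrableOn (fun s => g s * s) (Set.Ioi 0))
    (G : ℝ → ℝ) (hG : ∀ r, G r = ω * ∫ s in Set.Ioc (0 : ℝ) r, g s * s)
    (α : ℝ) (hα : α = ω * ∫ s in Set.Ioi (0 : ℝ), g s * s)
    (a₀ a : ℝ → ℝ) (ha₀ : ∀ r, a₀ r = B₀ * r / 2)
    (ha : ∀ r, a r = B₀ * r / 2 - G r / r)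
    (V : ℕ → ℝ → ℝ)
    (hV : ∀ (k : ℕ) (r : ℝ), V k r = 2 * k / r * (a₀ r - a r) + a r ^ 2 - a₀ r ^ 2)
    (ψ : ℕ → ℝ → ℝ)
    (hψ : ∀ (k : ℕ) (r : ℝ), ψ k r = Real.sqrt (B₀ / Real.Gamma ((k : ℝ) + 1))
        * (B₀ / 2) ^ ((k : ℝ) / 2) * r ^ k * Real.exp (-B₀ * r ^ 2 / 4))
    (lam : ℕ → ℝ)
    (hlam : ∀ k : ℕ, lam k = 2 * k * ω
        * ∫ r in Set.Ioi (0 : ℝ), ψ k r ^ 2 * (∫ s in Set.Ioi r, g s * s) * r⁻¹) :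
    ∀ k : ℕ, 1 ≤ k →
      (∫ r in Set.Ioi (0 : ℝ), ψ k r ^ 2 * max (-V k r) 0 * r)
        ≤ lam k + α * B₀ / Real.sqrt (2 * π * k) := by
  intro k hk
  have hflux (r : ℝ) : 0 ≤ G r ∧ G r ≤ α := by
    obtain ⟨h0, hle⟩ := setIntegral_Ioc_mem_Icc (fun s hs => mul_nonneg (hgnn s hs) hs.le) hint r
    rw [hG, hα]
    exact ⟨mul_nonneg hω h0, mul_le_mul_of_nonneg_left hle hω⟩
  have hα0 : 0 ≤ α := (hflux 0).1.trans (hflux 0).2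
  have hlam0 : 0 ≤ lam k := by
    rw [hlam]
    exact mul_nonneg (by positivity) (setIntegral_sq_mul_integral_Ioi_mul_inv_nonneg
      (fun s hs => mul_nonneg (hgnn s hs) hs.le) (ψ k))
  have hnonneg (r : ℝ) (hr : 0 < r) : 0 ≤ ψ k r ^ 2 * max (-V k r) 0 * r := by positivity
  set C := B₀ / k.factorial * (B₀ / 2) ^ k
  have hbound (r : ℝ) (hr : 0 < r) : ψ k r ^ 2 * max (-V k r) 0 * r
      ≤ α * (C * (r ^ (2 * k) * exp (-B₀ * r ^ 2 / 2) * max (B₀ - 2 * k / r ^ 2) 0 * r)) := by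
    have hpot := max_neg_potential_le (c := k) (B := B₀) (hflux r).1 (hflux r).2 hr.ne'
    rw [hψ, landau_ground_state_sq hB₀.le, hV, ha₀, ha]
    calc _ ≤ C * (r ^ (2 * k) * exp (-B₀ * r ^ 2 / 2)) * (α * max (B₀ - 2 * k / r ^ 2) 0) * r := by
          gcongr
      _ = _ := by ring
  calc (∫ r in Ioi 0, ψ k r ^ 2 * max (-V k r) 0 * r)
      ≤ ∫ r in Ioi 0,
          α * (C * (r ^ (2 * k) * exp (-B₀ * r ^ 2 / 2) * max (B₀ - 2 * k / r ^ 2) 0 * r)) :=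
        integral_mono_of_nonneg (ae_restrict_of_forall_mem measurableSet_Ioi hnonneg)
          (((integrableOn_pow_mul_exp_mul_max hB₀).const_mul C).const_mul α)
          (ae_restrict_of_forall_mem measurableSet_Ioi hbound)
    _ = α * (C * ((2 * k / B₀) ^ k * exp (-k))) := by
        rw [integral_const_mul, integral_const_mul, integral_pow_mul_exp_mul_max hB₀]
    _ ≤ α * (B₀ / √(2 * π * k)) :=
        mul_le_mul_of_nonneg_left (landau_ground_state_peak_le hB₀ (by omega)) hα0
    _ ≤ lam k + α * B₀ / √(2 * π * k) := by rw [mul_div_assoc]; linarith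

/-- Lemma 7.6 (lem-aux) of the paper: the expectation `Λ_k` of the negative part of the
effective perturbing potential `V_k` in the normalized Landau ground state `ψ_k` of the
`k`-th angular-momentum channel satisfies `Λ_k ≤ λ_k + αB₀/√(2πk)` for every `k ≥ 1`. -/
theorem lambda_k_upper_bound
    (B₀ ω : ℝ) (hB₀ : 0 < B₀) (hω : 0 ≤ ω) (g : ℝ → ℝ) (hgmeas : Measurable g)
    (hgnn : ∀ s : ℝ, 0 < s → 0 ≤ g s)
    (hint : IntegrableOn (fun s => g s * s) (Set.Ioi 0))
    (G : ℝ → ℝ) (hG : ∀ r, G r = ω * ∫ s in Set.Ioc (0 : ℝ) r, g s * s)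
    (α : ℝ) (hα : α = ω * ∫ s in Set.Ioi (0 : ℝ), g s * s)
    (a₀ a : ℝ → ℝ) (ha₀ : ∀ r, a₀ r = B₀ * r / 2)
    (ha : ∀ r, a r = B₀ * r / 2 - G r / r)
    (V : ℕ → ℝ → ℝ)
    (hV : ∀ (k : ℕ) (r : ℝ), V k r = 2 * k / r * (a₀ r - a r) + a r ^ 2 - a₀ r ^ 2)
    (ψ : ℕ → ℝ → ℝ)
    (hψ : ∀ (k : ℕ) (r : ℝ), ψ k r = Real.sqrt (B₀ / Real.Gamma ((k : ℝ) + 1))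
        * (B₀ / 2) ^ ((k : ℝ) / 2) * r ^ k * Real.exp (-B₀ * r ^ 2 / 4))
    (lam : ℕ → ℝ)
    (hlam : ∀ k : ℕ, lam k = 2 * k * ω
        * ∫ r in Set.Ioi (0 : ℝ), ψ k r ^ 2 * (∫ s in Set.Ioi r, g s * s) * r⁻¹) :
    ∀ k : ℕ, 1 ≤ k →
      (∫ r in Set.Ioi (0 : ℝ), ψ k r ^ 2 * max (-V k r) 0 * r)
        ≤ lam k + α * B₀ / Real.sqrt (2 * π * k) :=
  lambda_k_upper_bound_general B₀ ω hB₀ hω g hgnn hint G hG α hα a₀ a ha₀ ha V hV ψ hψ lam hlam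
end

section
/- Let β > 1, B₀ > 0, ω ≥ 0 and let g : (0,∞) → ℝ be a measurable function with 0 ≤ g(r) ≤ B₀·(1 + √B₀·r)^{−2β} for all r > 0. Define ψ_k(r) = √(B₀/Γ(k+1))·(B₀/2)^{k/2}·r^k·exp(−B₀r²/4) and λ_k = 2kω·∫₀^∞ ψ_k(r)²·(∫_r^∞ g(s)·s ds)·r^{−1} dr. Then for every integer k with 1 ≤ k ≤ β−1: λ_k ≤ ω·B₀/((β−1)·Γ(k)), where Γ is the Gamma function. -/
/-!
Bounding `g` by its majorant, the tail `∫_r^∞ g(s) s ds` is at most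
`(1 + √B₀ r)^(2 - 2β) / (2(β - 1))`. As `2k - 1 ≤ 2β - 2`, this decay absorbs the factor
`r^(2k-1)` of `ψ_k(r)² / r` at the price of `√B₀^(1-2k)`, which leaves a Gaussian
`exp(-B₀ r² / 2)` whose integral over `(0, ∞)` is at most `√(2 / B₀)`.
-/

open Real MeasureTheory Set Filter Topology

lemma pow_mul_one_add_rpow_le_one {x p : ℝ} (hx : 0 ≤ x) {n : ℕ} (h : n + p ≤ 0) :
    x ^ n * (1 + x) ^ p ≤ 1 :=
  calc x ^ n * (1 + x) ^ p ≤ (1 + x) ^ n * (1 + x) ^ p := by gcongr; linarith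
    _ = (1 + x) ^ ((n : ℝ) + p) := by rw [rpow_add (by linarith), rpow_natCast]
    _ ≤ 1 := rpow_le_one_of_one_le_of_nonpos (by linarith) h

lemma mul_mul_one_add_mul_rpow_le {b s q : ℝ} (hb : 0 ≤ b) (hs : 0 ≤ s) :
    b ^ 2 * s * (1 + b * s) ^ q ≤ b * (1 + b * s) ^ (q + 1) := by
  have h1 : 0 < 1 + b * s := by positivity
  rw [rpow_add_one h1.ne']
  have : b * s ≤ 1 + b * s := by linarith
  have := rpow_nonneg h1.le q
  calc b ^ 2 * s * (1 + b * s) ^ q = b * ((b * s) * (1 + b * s) ^ q) := by ring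
    _ ≤ b * ((1 + b * s) * (1 + b * s) ^ q) := by gcongr
    _ = _ := by ring

section TailIntegral

variable {b p : ℝ}

lemma hasDerivAt_one_add_mul_rpow_div (hp : p ≠ 0) {x : ℝ} (hx : 0 < 1 + b * x) :
    HasDerivAt (fun s => (1 + b * s) ^ p / p) (b * (1 + b * x) ^ (p - 1)) x := by
  have hlin : HasDerivAt (fun s => 1 + b * s) b x := by
    simpa using ((hasDerivAt_id x).const_mul b).const_add 1
  exact ((hlin.rpow_const (Or.inl hx.ne')).div_const p).congr_deriv (by field_simp)

lemma tendsto_one_add_mul_rpow_div_atTop (hb : 0 < b) (hp : p < 0) :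
    Tendsto (fun s => (1 + b * s) ^ p / p) atTop (𝓝 0) := by
  have hlin : Tendsto (fun s => 1 + b * s) atTop atTop :=
    tendsto_atTop_add_const_left _ 1 (tendsto_id.const_mul_atTop hb)
  simpa using ((tendsto_rpow_neg_atTop (y := -p) (by linarith)).comp hlin).div_const p

lemma integrableOn_Ioi_mul_one_add_mul_rpow (hb : 0 < b) (hp : p < 0) {r : ℝ} (hr : 0 ≤ r) :
    IntegrableOn (fun s => b * (1 + b * s) ^ (p - 1)) (Ioi r) :=
  integrableOn_Ioi_deriv_of_nonneg'
    (fun x hx => hasDerivAt_one_add_mul_rpow_div hp.ne (by have : 0 ≤ x := hr.trans hx; positivity))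
    (fun x hx => by have : 0 < x := hr.trans_lt hx; positivity)
    (tendsto_one_add_mul_rpow_div_atTop hb hp)

lemma integral_Ioi_mul_one_add_mul_rpow (hb : 0 < b) (hp : p < 0) {r : ℝ} (hr : 0 ≤ r) :
    ∫ s in Ioi r, b * (1 + b * s) ^ (p - 1) = -(1 + b * r) ^ p / p := by
  rw [integral_Ioi_of_hasDerivAt_of_nonneg'
    (fun x hx => hasDerivAt_one_add_mul_rpow_div hp.ne (by have : 0 ≤ x := hr.trans hx; positivity))
    (fun x hx => by have : 0 < x := hr.trans_lt hx; positivity)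
    (tendsto_one_add_mul_rpow_div_atTop hb hp)]
  ring

end TailIntegral

lemma integral_Ioi_exp_neg_mul_sq_le {a : ℝ} (ha : 0 < a) :
    ∫ x in Ioi 0, exp (-a * x ^ 2) ≤ (√a)⁻¹ := by
  have hπ : √π ≤ 2 := sqrt_le_iff.mpr ⟨zero_le_two, by linarith [pi_le_four]⟩
  rw [integral_gaussian_Ioi, sqrt_div' _ ha.le, div_div, inv_eq_one_div,
    div_le_div_iff₀ (by positivity) (by positivity)]
  nlinarith [sqrt_pos.mpr ha]

noncomputable def landauGroundState (B₀ : ℝ) (k : ℕ) (r : ℝ) : ℝ :=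
  √(B₀ / Gamma (k + 1)) * (B₀ / 2) ^ ((k : ℝ) / 2) * r ^ k * exp (-B₀ * r ^ 2 / 4)

lemma landauGroundState_sq {B₀ : ℝ} (hB₀ : 0 ≤ B₀) (k : ℕ) (r : ℝ) :
    landauGroundState B₀ k r ^ 2
      = B₀ / Gamma (k + 1) * (B₀ / 2) ^ k * r ^ (2 * k) * exp (-(B₀ / 2) * r ^ 2) := by
  have hΓ : 0 ≤ Gamma (k + 1) := (Gamma_pos_of_pos (by positivity)).le
  have hpow : ((B₀ / 2) ^ ((k : ℝ) / 2)) ^ 2 = (B₀ / 2) ^ k := by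
    rw [← rpow_natCast, ← rpow_mul (by positivity)]
    norm_num
  have hexp : exp (-B₀ * r ^ 2 / 4) ^ 2 = exp (-(B₀ / 2) * r ^ 2) := by
    rw [← exp_nat_mul]; ring_nf
  simp only [landauGroundState, mul_pow, sq_sqrt (div_nonneg hB₀ hΓ), hpow, hexp, ← pow_mul]
  ring

lemma landauGroundState_sq_mul_rpow_le {B₀ p : ℝ} (hB₀ : 0 < B₀) {k : ℕ} (hk : 1 ≤ k)
    (hkp : 2 * k - 1 + p ≤ 0) {r : ℝ} (hr : 0 < r) :
    landauGroundState B₀ k r ^ 2 * (1 + √B₀ * r) ^ p * r⁻¹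
      ≤ B₀ * √B₀ / (Gamma (k + 1) * 2 ^ k) * exp (-(B₀ / 2) * r ^ 2) := by
  obtain ⟨m, rfl⟩ : ∃ m, k = m + 1 := ⟨k - 1, by omega⟩
  obtain ⟨b, hb, rfl⟩ : ∃ b, 0 < b ∧ B₀ = b ^ 2 := ⟨√B₀, sqrt_pos.mpr hB₀, (sq_sqrt hB₀.le).symm⟩
  rw [sqrt_sq hb.le]
  have hdecay : (b * r) ^ (2 * m + 1) * (1 + b * r) ^ p ≤ 1 :=
    pow_mul_one_add_rpow_le_one (by positivity) (by push_cast at hkp ⊢; linarith)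
  have hsplit : landauGroundState (b ^ 2) (m + 1) r ^ 2 * (1 + b * r) ^ p * r⁻¹
      = b ^ 2 * b / (Gamma (↑(m + 1) + 1) * 2 ^ (m + 1)) * exp (-(b ^ 2 / 2) * r ^ 2)
        * ((b * r) ^ (2 * m + 1) * (1 + b * r) ^ p) := by
    rw [landauGroundState_sq hB₀.le, div_pow]
    field_simp
    ring
  rw [hsplit]
  exact mul_le_of_le_one_right (by positivity) hdecay

section PowerDecay

variable {β B₀ : ℝ} (hβ : 1 < β) (hB₀ : 0 < B₀) {g : ℝ → ℝ} (hgmeas : Measurable g)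
  (hg : ∀ s, 0 < s → 0 ≤ g s ∧ g s ≤ B₀ * (1 + √B₀ * s) ^ (-(2 * β)))
include hβ hB₀ hgmeas hg

lemma integral_Ioi_mul_le_of_le_rpow {r : ℝ} (hr : 0 < r) :
    ∫ s in Ioi r, g s * s ≤ (1 + √B₀ * r) ^ (2 - 2 * β) / (2 * (β - 1)) := by
  have hb : 0 < √B₀ := sqrt_pos.mpr hB₀
  have hp : 2 - 2 * β < 0 := by linarith
  have hdom : ∀ s ∈ Ioi r, g s * s ≤ √B₀ * (1 + √B₀ * s) ^ (2 - 2 * β - 1) := fun s hs => by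
    have hs : 0 < s := hr.trans hs
    calc g s * s ≤ B₀ * (1 + √B₀ * s) ^ (-(2 * β)) * s := by gcongr; exact (hg s hs).2
      _ = √B₀ ^ 2 * s * (1 + √B₀ * s) ^ (-(2 * β)) := by rw [sq_sqrt hB₀.le]; ring
      _ ≤ √B₀ * (1 + √B₀ * s) ^ (-(2 * β) + 1) := mul_mul_one_add_mul_rpow_le hb.le hs.le
      _ = √B₀ * (1 + √B₀ * s) ^ (2 - 2 * β - 1) := by ring_nf
  have hint := integrableOn_Ioi_mul_one_add_mul_rpow hb hp hr.le
  calc ∫ s in Ioi r, g s * s ≤ ∫ s in Ioi r, √B₀ * (1 + √B₀ * s) ^ (2 - 2 * β - 1) := by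
        refine setIntegral_mono_on ?_ hint measurableSet_Ioi hdom
        refine hint.mono' (hgmeas.mul measurable_id).aestronglyMeasurable ?_
        filter_upwards [ae_restrict_mem measurableSet_Ioi] with s hs
        have hs0 : 0 < s := hr.trans hs
        rw [Real.norm_of_nonneg (mul_nonneg (hg s hs0).1 hs0.le)]
        exact hdom s hs
    _ = (1 + √B₀ * r) ^ (2 - 2 * β) / (2 * (β - 1)) := by
        rw [integral_Ioi_mul_one_add_mul_rpow hb hp hr.le, neg_div, ← div_neg]
        ring_nf

lemma landauGroundState_sq_mul_integral_Ioi_le {k : ℕ} (hk : 1 ≤ k) (hkβ : (k : ℝ) ≤ β - 1)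
    {r : ℝ} (hr : 0 < r) :
    landauGroundState B₀ k r ^ 2 * (∫ s in Ioi r, g s * s) * r⁻¹
      ≤ B₀ * √B₀ / (Gamma (k + 1) * 2 ^ k) / (2 * (β - 1)) * exp (-(B₀ / 2) * r ^ 2) :=
  calc landauGroundState B₀ k r ^ 2 * (∫ s in Ioi r, g s * s) * r⁻¹
      ≤ landauGroundState B₀ k r ^ 2 * (1 + √B₀ * r) ^ (2 - 2 * β) * r⁻¹ / (2 * (β - 1)) := by
        rw [mul_div_right_comm, mul_div_assoc]
        gcongr
        exact integral_Ioi_mul_le_of_le_rpow hβ hB₀ hgmeas hg hr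
    _ ≤ _ := by
        rw [div_mul_eq_mul_div]
        have : 0 < β - 1 := by linarith
        exact div_le_div_of_nonneg_right
          (landauGroundState_sq_mul_rpow_le hB₀ hk (by linarith) hr) (by positivity)

lemma integral_landauGroundState_sq_mul_integral_Ioi_le {k : ℕ} (hk : 1 ≤ k)
    (hkβ : (k : ℝ) ≤ β - 1) :
    ∫ r in Ioi 0, landauGroundState B₀ k r ^ 2 * (∫ s in Ioi r, g s * s) * r⁻¹
      ≤ B₀ / (2 * k * ((β - 1) * Gamma k)) := by
  have hβ1 : 0 < β - 1 := by linarith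
  have hk0 : (0 : ℝ) < k := by exact_mod_cast hk
  set C := B₀ * √B₀ / (Gamma (k + 1) * 2 ^ k) / (2 * (β - 1)) with hC
  have hnonneg : ∀ r ∈ Ioi (0 : ℝ),
      0 ≤ landauGroundState B₀ k r ^ 2 * (∫ s in Ioi r, g s * s) * r⁻¹ := fun r (hr : 0 < r) => by
    have : 0 ≤ ∫ s in Ioi r, g s * s := setIntegral_nonneg measurableSet_Ioi fun s hs =>
      mul_nonneg (hg s (hr.trans hs)).1 (hr.trans hs).le
    positivity
  have hsqrt2 : √2 ≤ 2 ^ k :=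
    calc √2 ≤ 2 := sqrt_le_iff.mpr ⟨zero_le_two, by norm_num⟩
      _ ≤ 2 ^ k := le_self_pow₀ one_le_two (by omega)
  calc _ ≤ ∫ r in Ioi (0 : ℝ), C * exp (-(B₀ / 2) * r ^ 2) :=
        integral_mono_of_nonneg (ae_restrict_of_forall_mem measurableSet_Ioi hnonneg)
          ((integrable_exp_neg_mul_sq (by positivity)).const_mul C).integrableOn
          (ae_restrict_of_forall_mem measurableSet_Ioi fun r hr =>
            landauGroundState_sq_mul_integral_Ioi_le hβ hB₀ hgmeas hg hk hkβ hr)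
    _ ≤ C * (√(B₀ / 2))⁻¹ := by
        rw [integral_const_mul]
        gcongr
        exact integral_Ioi_exp_neg_mul_sq_le (by positivity)
    _ = B₀ * (√2 / 2 ^ k) / (2 * k * ((β - 1) * Gamma k)) := by
        rw [hC, Gamma_add_one hk0.ne', sqrt_div' _ zero_le_two]
        field_simp
    _ ≤ B₀ / (2 * k * ((β - 1) * Gamma k)) := by
        refine div_le_div_of_nonneg_right (mul_le_of_le_one_right hB₀.le ?_) (by positivity)
        exact (div_le_one (by positivity)).mpr hsqrt2

end PowerDecay

/-- Estimate (k-geq-1) from the proof of Theorem 7.3 (thm-power): for a power-decaying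
perturbation `0 ≤ g(r) ≤ B₀(1+√B₀ r)^{−2β}` and `1 ≤ k ≤ β−1`,
`λ_k ≤ ωB₀/((β−1)Γ(k))`. -/
theorem power_decay_lambda_k_small_k
    (β B₀ ω : ℝ) (hβ : 1 < β) (hB₀ : 0 < B₀) (hω : 0 ≤ ω)
    (g : ℝ → ℝ) (hgmeas : Measurable g)
    (hg : ∀ r : ℝ, 0 < r →
      0 ≤ g r ∧ g r ≤ B₀ * (1 + Real.sqrt B₀ * r) ^ (-(2 * β)))
    (ψ : ℕ → ℝ → ℝ)
    (hψ : ∀ (k : ℕ) (r : ℝ), ψ k r = Real.sqrt (B₀ / Real.Gamma ((k : ℝ) + 1))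
        * (B₀ / 2) ^ ((k : ℝ) / 2) * r ^ k * Real.exp (-B₀ * r ^ 2 / 4))
    (lam : ℕ → ℝ)
    (hlam : ∀ k : ℕ, lam k = 2 * k * ω
        * ∫ r in Set.Ioi (0 : ℝ), ψ k r ^ 2 * (∫ s in Set.Ioi r, g s * s) * r⁻¹) :
    ∀ k : ℕ, 1 ≤ k → (k : ℝ) ≤ β - 1 →
      lam k ≤ ω * B₀ / ((β - 1) * Real.Gamma (k : ℝ)) := by
  intro k hk hkβ
  have hψk : ψ k = landauGroundState B₀ k := funext (hψ k)
  have hk0 : (0 : ℝ) < k := by exact_mod_cast hk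
  have hΓ : 0 < (β - 1) * Gamma k := mul_pos (by linarith) (Gamma_pos_of_pos hk0)
  calc lam k ≤ 2 * k * ω * (B₀ / (2 * k * ((β - 1) * Gamma k))) := by
        rw [hlam k, hψk]
        gcongr
        exact integral_landauGroundState_sq_mul_integral_Ioi_le hβ hB₀ hgmeas hg hk hkβ
    _ = ω * B₀ / ((β - 1) * Gamma k) := by
        field_simp
end

section
/- Let β > 1, B₀ > 0, ω ≥ 0 and let g : (0,∞) → ℝ be a measurable function with 0 ≤ g(r) ≤ B₀·(1 + √B₀·r)^{−2β} for all r > 0. Define ψ_k(r) = √(B₀/Γ(k+1))·(B₀/2)^{k/2}·r^k·exp(−B₀r²/4) and λ_k = 2kω·∫₀^∞ ψ_k(r)²·(∫_r^∞ g(s)·s ds)·r^{−1} dr. Then for every integer k ≥ 1 with k > β−1: λ_k ≤ ω·B₀·Γ(k+1−β)/((β−1)·Γ(k)), where Γ is the Gamma function. -/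
/-! Dropping the `1` in `1 + √B₀ s` bounds the tail `∫_r^∞ g(s) s ds` by the pure power
`B₀^{1-β} r^{2-2β} / (2(β-1))`. Against the Gaussian weight `ψ_k(r)² r⁻¹` this power turns the
outer integral into a Gamma integral, `∫₀^∞ r^{2a-1} e^{-B₀r²/2} dr = (B₀/2)^{-a} Γ(a) / 2` with
`a = k + 1 - β`, and the constants collect to the claimed bound times `2^{-β} ≤ 1`. -/

open Real MeasureTheory Set

lemma power_decay_mul_self_le {B₀ β s : ℝ} (hB₀ : 0 < B₀) (hβ : 0 ≤ β) (hs : 0 < s) :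
    B₀ * (1 + √B₀ * s) ^ (-(2 * β)) * s ≤ B₀ ^ (1 - β) * s ^ (1 - 2 * β) := by
  have hsqrt : 0 < √B₀ := sqrt_pos.mpr hB₀
  have hdrop : (1 + √B₀ * s) ^ (-(2 * β)) ≤ (√B₀ * s) ^ (-(2 * β)) :=
    rpow_le_rpow_of_nonpos (by positivity) (by linarith) (by linarith)
  calc B₀ * (1 + √B₀ * s) ^ (-(2 * β)) * s ≤ B₀ * (√B₀ * s) ^ (-(2 * β)) * s := by gcongr
    _ = B₀ ^ (1 - β) * s ^ (1 - 2 * β) := by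
      rw [mul_rpow hsqrt.le hs.le, sqrt_eq_rpow, ← rpow_mul hB₀.le,
        show 1 - β = 1 + 1 / 2 * -(2 * β) by ring, show 1 - 2 * β = -(2 * β) + 1 by ring,
        rpow_add hB₀, rpow_add hs, rpow_one, rpow_one]
      ring

lemma setIntegral_Ioi_mul_self_le_of_power_decay {B₀ β r : ℝ} {g : ℝ → ℝ} (hB₀ : 0 < B₀)
    (hβ : 1 < β) (hr : 0 < r)
    (hg : ∀ s, 0 < s → 0 ≤ g s ∧ g s ≤ B₀ * (1 + √B₀ * s) ^ (-(2 * β))) :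
    ∫ s in Ioi r, g s * s ≤ B₀ ^ (1 - β) / (2 * (β - 1)) * r ^ (2 - 2 * β) := by
  have hexp : 1 - 2 * β < -1 := by linarith
  calc ∫ s in Ioi r, g s * s ≤ ∫ s in Ioi r, B₀ ^ (1 - β) * s ^ (1 - 2 * β) := by
        refine integral_mono_of_nonneg ?_ ((integrableOn_Ioi_rpow_of_lt hexp hr).const_mul _) ?_
        all_goals
          refine (ae_restrict_iff' measurableSet_Ioi).2 (Filter.Eventually.of_forall fun s hs => ?_)
          have hs0 : 0 < s := hr.trans hs
        · exact mul_nonneg (hg s hs0).1 hs0.le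
        · exact (mul_le_mul_of_nonneg_right (hg s hs0).2 hs0.le).trans
            (power_decay_mul_self_le hB₀ (by linarith) hs0)
    _ = B₀ ^ (1 - β) / (2 * (β - 1)) * r ^ (2 - 2 * β) := by
      rw [integral_const_mul, integral_Ioi_rpow_of_lt hexp hr,
        show 1 - 2 * β + 1 = 2 - 2 * β by ring, show 2 - 2 * β = -(2 * (β - 1)) by ring]
      field_simp

lemma setIntegral_rpow_mul_exp_neg_mul_sq_mul_le {b p q C : ℝ} {T : ℝ → ℝ} (hb : 0 < b)
    (hpq : 0 < p + q) (hT : ∀ r, 0 < r → 0 ≤ T r ∧ T r ≤ C * r ^ q) :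
    ∫ r in Ioi (0 : ℝ), r ^ p * exp (-b * r ^ 2) * T r * r⁻¹
      ≤ C * (b ^ (-((p + q) / 2)) * Gamma ((p + q) / 2) / 2) := by
  have hmoment : -1 < p + q - 1 := by linarith
  calc ∫ r in Ioi (0 : ℝ), r ^ p * exp (-b * r ^ 2) * T r * r⁻¹
        ≤ ∫ r in Ioi (0 : ℝ), C * (r ^ (p + q - 1) * exp (-b * r ^ (2 : ℝ))) := by
        refine integral_mono_of_nonneg ?_
          ((integrableOn_rpow_mul_exp_neg_mul_rpow hmoment two_pos hb).const_mul _) ?_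
        all_goals
          refine (ae_restrict_iff' measurableSet_Ioi).2 (Filter.Eventually.of_forall fun r hr => ?_)
          have hr0 : (0 : ℝ) < r := hr
          have hweight : 0 ≤ r ^ p * exp (-b * r ^ 2) * r⁻¹ := by positivity
        · show 0 ≤ r ^ p * exp (-b * r ^ 2) * T r * r⁻¹
          rw [mul_right_comm]
          exact mul_nonneg hweight (hT r hr0).1
        · calc r ^ p * exp (-b * r ^ 2) * T r * r⁻¹
              = r ^ p * exp (-b * r ^ 2) * r⁻¹ * T r := by ring
            _ ≤ r ^ p * exp (-b * r ^ 2) * r⁻¹ * (C * r ^ q) :=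
              mul_le_mul_of_nonneg_left (hT r hr0).2 hweight
            _ = C * (r ^ (p + q - 1) * exp (-b * r ^ (2 : ℝ))) := by
              rw [rpow_two, rpow_sub hr0, rpow_add hr0, rpow_one]
              ring
    _ = C * (b ^ (-((p + q) / 2)) * Gamma ((p + q) / 2) / 2) := by
      rw [integral_const_mul, integral_rpow_mul_exp_neg_mul_rpow two_pos hmoment hb,
        sub_add_cancel, neg_div]
      ring

lemma sq_landau_ground_state {B₀ : ℝ} (hB₀ : 0 < B₀) (k : ℕ) (r : ℝ) :
    (√(B₀ / Gamma (k + 1)) * (B₀ / 2) ^ ((k : ℝ) / 2) * r ^ k * exp (-B₀ * r ^ 2 / 4)) ^ 2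
      = B₀ / Gamma (k + 1) * (B₀ / 2) ^ (k : ℝ) * (r ^ (2 * k : ℝ) * exp (-(B₀ / 2) * r ^ 2)) := by
  have hΓ : 0 < Gamma (k + 1) := Gamma_pos_of_pos (by positivity)
  rw [mul_pow, mul_pow, mul_pow, sq_sqrt (by positivity), ← rpow_natCast _ 2,
    ← rpow_mul (by positivity), ← exp_nat_mul, ← pow_mul,
    show (k : ℝ) / 2 * ((2 : ℕ) : ℝ) = k by push_cast; ring,
    show 2 * (k : ℝ) = ((k * 2 : ℕ) : ℝ) by push_cast; ring, rpow_natCast r]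
  ring_nf

lemma div_two_rpow_mul_rpow_mul_div_two_rpow {B₀ : ℝ} (hB₀ : 0 < B₀) (β K : ℝ) :
    (B₀ / 2) ^ K * B₀ ^ (1 - β) * (B₀ / 2) ^ (-(K + 1 - β)) = 2 ^ (1 - β) := by
  rw [mul_right_comm, ← rpow_add (by positivity), show K + -(K + 1 - β) = -(1 - β) by ring,
    rpow_neg (by positivity), ← inv_rpow (by positivity), ← mul_rpow (by positivity) hB₀.le,
    inv_div, div_mul_cancel₀ _ hB₀.ne']

theorem power_decay_lambda_k_large_k_general
    (β B₀ ω : ℝ) (hβ : 1 < β) (hB₀ : 0 < B₀) (hω : 0 ≤ ω)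
    (g : ℝ → ℝ)
    (hg : ∀ r : ℝ, 0 < r →
      0 ≤ g r ∧ g r ≤ B₀ * (1 + Real.sqrt B₀ * r) ^ (-(2 * β)))
    (ψ : ℕ → ℝ → ℝ)
    (hψ : ∀ (k : ℕ) (r : ℝ), ψ k r = Real.sqrt (B₀ / Real.Gamma ((k : ℝ) + 1))
        * (B₀ / 2) ^ ((k : ℝ) / 2) * r ^ k * Real.exp (-B₀ * r ^ 2 / 4))
    (lam : ℕ → ℝ)
    (hlam : ∀ k : ℕ, lam k = 2 * k * ω
        * ∫ r in Set.Ioi (0 : ℝ), ψ k r ^ 2 * (∫ s in Set.Ioi r, g s * s) * r⁻¹) :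
    ∀ k : ℕ, 1 ≤ k → β - 1 < (k : ℝ) →
      lam k ≤ ω * B₀ * Real.Gamma ((k : ℝ) + 1 - β) / ((β - 1) * Real.Gamma (k : ℝ)) := by
  intro k hk hkβ
  set a := (k : ℝ) + 1 - β
  have hk0 : (0 : ℝ) < k := by exact_mod_cast hk
  have hΓk : 0 < Gamma k := Gamma_pos_of_pos hk0
  have hΓa : 0 < Gamma a := Gamma_pos_of_pos (by linarith)
  have hlamk : lam k = 2 * k * ω * (B₀ / Gamma (k + 1) * (B₀ / 2) ^ (k : ℝ))
      * ∫ r in Ioi 0, r ^ (2 * (k : ℝ)) * exp (-(B₀ / 2) * r ^ 2)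
        * (∫ s in Ioi r, g s * s) * r⁻¹ := by
    rw [hlam, mul_assoc (2 * k * ω),
      ← integral_const_mul (B₀ / Gamma (k + 1) * (B₀ / 2) ^ (k : ℝ))]
    congr 2 with r
    rw [hψ, sq_landau_ground_state hB₀]
    ring
  have htail : ∀ r, 0 < r → 0 ≤ ∫ s in Ioi r, g s * s ∧
      ∫ s in Ioi r, g s * s ≤ B₀ ^ (1 - β) / (2 * (β - 1)) * r ^ (2 - 2 * β) := fun r hr =>
    ⟨setIntegral_nonneg measurableSet_Ioi fun s hs =>
        mul_nonneg (hg s (hr.trans hs)).1 (hr.trans hs).le,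
      setIntegral_Ioi_mul_self_le_of_power_decay hB₀ hβ hr hg⟩
  have hinner := setIntegral_rpow_mul_exp_neg_mul_sq_mul_le (half_pos hB₀)
    (p := 2 * k) (q := 2 - 2 * β) (by linarith) htail
  rw [show (2 * (k : ℝ) + (2 - 2 * β)) / 2 = a by ring] at hinner
  calc lam k ≤ 2 * k * ω * (B₀ / Gamma (k + 1) * (B₀ / 2) ^ (k : ℝ))
        * (B₀ ^ (1 - β) / (2 * (β - 1)) * ((B₀ / 2) ^ (-a) * Gamma a / 2)) := by
        rw [hlamk]; gcongr
    _ = ω * B₀ * Gamma a / ((β - 1) * Gamma k)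
        * ((B₀ / 2) ^ (k : ℝ) * B₀ ^ (1 - β) * (B₀ / 2) ^ (-a) / 2) := by
        rw [Gamma_add_one hk0.ne']
        field_simp
    _ ≤ ω * B₀ * Gamma a / ((β - 1) * Gamma k) * 1 := by
        rw [div_two_rpow_mul_rpow_mul_div_two_rpow hB₀]
        have := sub_pos.2 hβ
        gcongr
        linarith [rpow_le_one_of_one_le_of_nonpos one_le_two (by linarith : 1 - β ≤ 0)]
    _ = ω * B₀ * Gamma a / ((β - 1) * Gamma k) := mul_one _

/-- Large-`k` estimate from the proof of Theorem 7.3 (thm-power): for a power-decaying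
perturbation `0 ≤ g(r) ≤ B₀(1+√B₀ r)^{−2β}` and integers `k ≥ 1` with `k > β−1`,
`λ_k ≤ ωB₀Γ(k+1−β)/((β−1)Γ(k))`. -/
theorem power_decay_lambda_k_large_k
    (β B₀ ω : ℝ) (hβ : 1 < β) (hB₀ : 0 < B₀) (hω : 0 ≤ ω)
    (g : ℝ → ℝ) (hgmeas : Measurable g)
    (hg : ∀ r : ℝ, 0 < r →
      0 ≤ g r ∧ g r ≤ B₀ * (1 + Real.sqrt B₀ * r) ^ (-(2 * β)))
    (ψ : ℕ → ℝ → ℝ)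
    (hψ : ∀ (k : ℕ) (r : ℝ), ψ k r = Real.sqrt (B₀ / Real.Gamma ((k : ℝ) + 1))
        * (B₀ / 2) ^ ((k : ℝ) / 2) * r ^ k * Real.exp (-B₀ * r ^ 2 / 4))
    (lam : ℕ → ℝ)
    (hlam : ∀ k : ℕ, lam k = 2 * k * ω
        * ∫ r in Set.Ioi (0 : ℝ), ψ k r ^ 2 * (∫ s in Set.Ioi r, g s * s) * r⁻¹) :
    ∀ k : ℕ, 1 ≤ k → β - 1 < (k : ℝ) →
      lam k ≤ ω * B₀ * Real.Gamma ((k : ℝ) + 1 - β) / ((β - 1) * Real.Gamma (k : ℝ)) :=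
  power_decay_lambda_k_large_k_general β B₀ ω hβ hB₀ hω g hg ψ hψ lam hlam
end

section
/- Let B₀ > 0, ε > 0, ω ≥ 0 and let g : (0,∞) → ℝ be a measurable function with 0 ≤ g(r) ≤ B₀·exp(−εB₀r²) for all r > 0. Define ψ_k(r) = √(B₀/Γ(k+1))·(B₀/2)^{k/2}·r^k·exp(−B₀r²/4) and λ_k = 2kω·∫₀^∞ ψ_k(r)²·(∫_r^∞ g(s)·s ds)·r^{−1} dr. Then ω·∫₀^∞ g(r)·r dr ≤ ω/(2ε), and for every integer k ≥ 1: λ_k ≤ (ω·B₀/(2ε))·(1+2ε)^{−k}. -/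
/-! Dominating `g` by its Gaussian majorant bounds the tail `∫_r^∞ g(s) s ds` by
`e^{-εB₀r²}/(2ε)`; at `r = 0` this is the flux bound. Inserted into `λ_k`, it turns the integrand
into the Gaussian moment `r^{2k-1} e^{-(1/2+ε)B₀r²}`, whose integral `(k-1)!/(2((1/2+ε)B₀)^k)`
cancels the normalisation of `ψ_k` up to the factor `(1+2ε)^{-k}`. -/

open Real MeasureTheory Set Filter
open scoped Nat

theorem integral_Ioi_exp_neg_mul_sq_mul_self {a : ℝ} (ha : 0 < a) (r : ℝ) :
    ∫ s in Ioi r, exp (-a * s ^ 2) * s = exp (-a * r ^ 2) / (2 * a) := by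
  have hderiv : ∀ s ∈ Ici r,
      HasDerivAt (fun s => -exp (-a * s ^ 2) / (2 * a)) (exp (-a * s ^ 2) * s) s := by
    intro s _
    refine (((hasDerivAt_pow 2 s).const_mul (-a)).exp.fun_neg.div_const (2 * a)).congr_deriv ?_
    field_simp
    ring
  have hint : IntegrableOn (fun s => exp (-a * s ^ 2) * s) (Ioi r) := by
    simpa only [mul_comm] using (integrable_mul_exp_neg_mul_sq ha).integrableOn
  have hlim : Tendsto (fun s => -exp (-a * s ^ 2) / (2 * a)) atTop (nhds 0) := by
    have hexp : Tendsto (fun s : ℝ => exp (-a * s ^ 2)) atTop (nhds 0) :=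
      tendsto_exp_atBot.comp <|
        (tendsto_pow_atTop two_ne_zero).const_mul_atTop_of_neg (neg_neg_of_pos ha)
    simpa using hexp.neg.div_const (2 * a)
  rw [integral_Ioi_of_hasDerivAt_of_tendsto' hderiv hint hlim]
  ring

theorem setIntegral_Ioi_mul_self_le {a C r : ℝ} (ha : 0 < a) (hr : 0 ≤ r) {g : ℝ → ℝ}
    (hg : ∀ s, 0 < s → 0 ≤ g s ∧ g s ≤ C * exp (-a * s ^ 2)) :
    ∫ s in Ioi r, g s * s ≤ C * exp (-a * r ^ 2) / (2 * a) := by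
  have hpos : ∀ᵐ s ∂volume.restrict (Ioi r), 0 < s := by
    filter_upwards [ae_restrict_mem measurableSet_Ioi] with s hs using hr.trans_lt hs
  have hmaj : IntegrableOn (fun s => C * (exp (-a * s ^ 2) * s)) (Ioi r) := by
    simpa only [mul_comm (exp _)] using
      ((integrable_mul_exp_neg_mul_sq ha).const_mul C).integrableOn (s := Ioi r)
  calc ∫ s in Ioi r, g s * s ≤ ∫ s in Ioi r, C * (exp (-a * s ^ 2) * s) := by
        refine integral_mono_of_nonneg ?_ hmaj ?_
        · filter_upwards [hpos] with s hs using mul_nonneg (hg s hs).1 hs.le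
        · filter_upwards [hpos] with s hs
          rw [← mul_assoc]
          exact mul_le_mul_of_nonneg_right (hg s hs).2 hs.le
    _ = C * exp (-a * r ^ 2) / (2 * a) := by
        rw [integral_const_mul, integral_Ioi_exp_neg_mul_sq_mul_self ha, mul_div_assoc]

theorem integral_Ioi_pow_mul_exp_neg_mul_sq {b : ℝ} (hb : 0 < b) (n : ℕ) :
    ∫ x in Ioi 0, x ^ (2 * n + 1) * exp (-b * x ^ 2) = n ! / (2 * b ^ (n + 1)) := by
  have h := integral_rpow_mul_exp_neg_mul_rpow two_pos
    (neg_one_lt_zero.trans_le (2 * n + 1).cast_nonneg) hb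
  have hexp : (((2 * n + 1 : ℕ) : ℝ) + 1) / 2 = (n + 1 : ℕ) := by push_cast; ring
  rw [neg_div, hexp, rpow_neg hb.le, rpow_natCast, Nat.cast_succ n, Gamma_nat_eq_factorial] at h
  simp only [rpow_natCast, rpow_two] at h
  rw [h]
  field_simp

theorem integrableOn_pow_mul_exp_neg_mul_sq {b : ℝ} (hb : 0 < b) (n : ℕ) :
    IntegrableOn (fun x : ℝ => x ^ n * exp (-b * x ^ 2)) (Ioi 0) := by
  simpa only [rpow_natCast] using
    integrableOn_rpow_mul_exp_neg_mul_sq hb (neg_one_lt_zero.trans_le n.cast_nonneg)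

theorem integral_Ioi_pow_mul_exp_mul_tail_le {a β C c : ℝ} (ha : 0 < a) (hβ : 0 ≤ β) (hc : 0 ≤ c)
    {g : ℝ → ℝ} (hg : ∀ s, 0 < s → 0 ≤ g s ∧ g s ≤ C * exp (-a * s ^ 2)) (n : ℕ) :
    ∫ r in Ioi 0, c * r ^ (2 * (n + 1)) * exp (-β * r ^ 2) * (∫ s in Ioi r, g s * s) * r⁻¹
      ≤ c * C / (2 * a) * (n ! / (2 * (β + a) ^ (n + 1))) := by
  have hb : 0 < β + a := by linarith
  have hpos : ∀ᵐ r ∂volume.restrict (Ioi 0), (0 : ℝ) < r := ae_restrict_mem measurableSet_Ioi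
  calc _ ≤ ∫ r in Ioi 0, c * C / (2 * a) * (r ^ (2 * n + 1) * exp (-(β + a) * r ^ 2)) := by
        refine integral_mono_of_nonneg ?_
          ((integrableOn_pow_mul_exp_neg_mul_sq hb _).const_mul _) ?_
        · filter_upwards [hpos] with r hr
          have : 0 ≤ ∫ s in Ioi r, g s * s := setIntegral_nonneg measurableSet_Ioi fun s hs =>
            mul_nonneg (hg s (hr.trans hs)).1 (hr.trans hs).le
          positivity
        · filter_upwards [hpos] with r hr
          calc _ ≤ c * r ^ (2 * (n + 1)) * exp (-β * r ^ 2) * (C * exp (-a * r ^ 2) / (2 * a))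
                * r⁻¹ := by
                gcongr
                exact setIntegral_Ioi_mul_self_le ha hr.le hg
            _ = _ := by
                rw [show -(β + a) * r ^ 2 = -β * r ^ 2 + -a * r ^ 2 by ring, exp_add]
                field_simp
                ring
    _ = _ := by rw [integral_const_mul, integral_Ioi_pow_mul_exp_neg_mul_sq hb]

noncomputable def landauState (B : ℝ) (k : ℕ) (r : ℝ) : ℝ :=
  √(B / Gamma (k + 1)) * (B / 2) ^ ((k : ℝ) / 2) * r ^ k * exp (-B * r ^ 2 / 4)

theorem landauState_sq {B : ℝ} (hB : 0 < B) (k : ℕ) (r : ℝ) :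
    landauState B k r ^ 2 = B * (B / 2) ^ k / k ! * r ^ (2 * k) * exp (-(B / 2) * r ^ 2) := by
  rw [landauState, Gamma_nat_eq_factorial, mul_pow, mul_pow, mul_pow, sq_sqrt (by positivity),
    ← rpow_mul_natCast (by positivity), Nat.cast_two, div_mul_cancel₀ _ two_ne_zero, rpow_natCast,
    ← pow_mul, ← exp_nat_mul]
  ring_nf

theorem gaussian_decay_estimates_general
    (B₀ ε ω : ℝ) (hB₀ : 0 < B₀) (hε : 0 < ε) (hω : 0 ≤ ω)
    (g : ℝ → ℝ)
    (hg : ∀ r : ℝ, 0 < r → 0 ≤ g r ∧ g r ≤ B₀ * Real.exp (-ε * B₀ * r ^ 2))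
    (ψ : ℕ → ℝ → ℝ)
    (hψ : ∀ (k : ℕ) (r : ℝ), ψ k r = Real.sqrt (B₀ / Real.Gamma ((k : ℝ) + 1))
        * (B₀ / 2) ^ ((k : ℝ) / 2) * r ^ k * Real.exp (-B₀ * r ^ 2 / 4))
    (lam : ℕ → ℝ)
    (hlam : ∀ k : ℕ, lam k = 2 * k * ω
        * ∫ r in Set.Ioi (0 : ℝ), ψ k r ^ 2 * (∫ s in Set.Ioi r, g s * s) * r⁻¹) :
    ω * (∫ r in Set.Ioi (0 : ℝ), g r * r) ≤ ω / (2 * ε)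
      ∧ ∀ k : ℕ, 1 ≤ k → lam k ≤ ω * B₀ / (2 * ε) * ((1 + 2 * ε) ^ k)⁻¹ := by
  have hεB : 0 < ε * B₀ := mul_pos hε hB₀
  have hg' : ∀ s, 0 < s → 0 ≤ g s ∧ g s ≤ B₀ * exp (-(ε * B₀) * s ^ 2) := by
    simpa only [neg_mul] using hg
  refine ⟨?_, fun k hk => ?_⟩
  · have hflux := setIntegral_Ioi_mul_self_le hεB le_rfl hg'
    calc ω * ∫ r in Ioi 0, g r * r ≤ ω * (B₀ * exp (-(ε * B₀) * 0 ^ 2) / (2 * (ε * B₀))) := by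
          gcongr
      _ = ω / (2 * ε) := by field_simp; simp
  · obtain ⟨n, rfl⟩ := Nat.exists_eq_add_of_le' hk
    have hbound := integral_Ioi_pow_mul_exp_mul_tail_le hεB (half_pos hB₀).le
      (c := B₀ * (B₀ / 2) ^ (n + 1) / (n + 1)!) (by positivity) hg' n
    obtain rfl : ψ = landauState B₀ := funext fun k => funext (hψ k)
    simp_rw [hlam, landauState_sq hB₀]
    calc _ ≤ 2 * ((n + 1 : ℕ) : ℝ) * ω * (B₀ * (B₀ / 2) ^ (n + 1) / (n + 1)! * B₀ / (2 * (ε * B₀))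
          * (n ! / (2 * (B₀ / 2 + ε * B₀) ^ (n + 1)))) := by gcongr
      _ = _ := by
        rw [show B₀ / 2 + ε * B₀ = B₀ / 2 * (1 + 2 * ε) by ring, mul_pow, Nat.factorial_succ]
        push_cast
        field_simp

/-- Estimates from the proof of Theorem 7.4 (thm-gauss) for a magnetic perturbation with
Gaussian decay `0 ≤ g(r) ≤ B₀ e^{−εB₀r²}`: the flux `ω∫₀^∞ g(r) r dr` is at most
`ω/(2ε)`, and `λ_k ≤ (ωB₀/(2ε))(1+2ε)^{−k}` for every `k ≥ 1`. -/
theorem gaussian_decay_estimates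
    (B₀ ε ω : ℝ) (hB₀ : 0 < B₀) (hε : 0 < ε) (hω : 0 ≤ ω)
    (g : ℝ → ℝ) (hgmeas : Measurable g)
    (hg : ∀ r : ℝ, 0 < r → 0 ≤ g r ∧ g r ≤ B₀ * Real.exp (-ε * B₀ * r ^ 2))
    (ψ : ℕ → ℝ → ℝ)
    (hψ : ∀ (k : ℕ) (r : ℝ), ψ k r = Real.sqrt (B₀ / Real.Gamma ((k : ℝ) + 1))
        * (B₀ / 2) ^ ((k : ℝ) / 2) * r ^ k * Real.exp (-B₀ * r ^ 2 / 4))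
    (lam : ℕ → ℝ)
    (hlam : ∀ k : ℕ, lam k = 2 * k * ω
        * ∫ r in Set.Ioi (0 : ℝ), ψ k r ^ 2 * (∫ s in Set.Ioi r, g s * s) * r⁻¹) :
    ω * (∫ r in Set.Ioi (0 : ℝ), g r * r) ≤ ω / (2 * ε)
      ∧ ∀ k : ℕ, 1 ≤ k → lam k ≤ ω * B₀ / (2 * ε) * ((1 + 2 * ε) ^ k)⁻¹ :=
  gaussian_decay_estimates_general B₀ ε ω hB₀ hε hω g hg ψ hψ lam hlam
end

section
/- Let B₀ > 0, R > 0, ω ≥ 0 and let g : (0,∞) → ℝ be given by g(r) = B₀ for r ≤ R and g(r) = 0 for r > R. Define ψ_k(r) = √(B₀/Γ(k+1))·(B₀/2)^{k/2}·r^k·exp(−B₀r²/4) and λ_k = 2kω·∫₀^∞ ψ_k(r)²·(∫_r^∞ g(s)·s ds)·r^{−1} dr. Then ω·∫₀^∞ g(r)·r dr = ω·B₀R²/2, and for every integer k ≥ 1: λ_k ≤ (ω·B₀/Γ(k+1))·(B₀R²/2)^{k+1}. -/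
/-!
For `r ≥ 0` the tail `∫_r^∞ g(s) s ds` equals `B₀(R² - r²)/2` when `r < R` and vanishes otherwise;
at `r = 0` this is the flux. For `λ_k`, the Gaussian factor of `ψ_k²` is at most `1` and the tail
is at most `B₀R²/2`, so the integrand is dominated by `(B₀/Γ(k+1)) (B₀/2)^k (B₀R²/2) r^(2k-1)`
on `(0, R]`, whose integral `… R^(2k)/(2k)` cancels the factor `2k`.
-/

open Real MeasureTheory Set

theorem setIntegral_Ioi_mul_self_of_eq_step {g : ℝ → ℝ} {B₀ R r : ℝ}
    (hg : ∀ s, 0 < s → g s = if s ≤ R then B₀ else 0) (hr : 0 ≤ r) :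
    ∫ s in Ioi r, g s * s = if r < R then B₀ * (R ^ 2 - r ^ 2) / 2 else 0 := by
  have hstep : EqOn (fun s => g s * s) ((Iic R).indicator fun s => B₀ * s) (Ioi r) := by
    intro s hs
    by_cases h : s ≤ R <;> simp [hg s (hr.trans_lt hs), h]
  rw [setIntegral_congr_fun measurableSet_Ioi hstep, setIntegral_indicator measurableSet_Iic,
    Ioi_inter_Iic]
  split_ifs with h
  · rw [← intervalIntegral.integral_of_le h.le, intervalIntegral.integral_const_mul, integral_id]
    ring
  · simp [Ioc_eq_empty h]

theorem sq_sqrt_mul_rpow_half {a b : ℝ} (ha : 0 ≤ a) (hb : 0 ≤ b) (k : ℕ) :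
    (√a * b ^ ((k : ℝ) / 2)) ^ 2 = a * b ^ k := by
  rw [mul_pow, sq_sqrt ha, ← rpow_natCast (b ^ _), ← rpow_mul hb]
  norm_num

theorem integral_indicator_Iic_pow {R : ℝ} (hR : 0 ≤ R) (n : ℕ) :
    ∫ r in Ioi 0, (Iic R).indicator (fun r : ℝ => r ^ n) r = R ^ (n + 1) / ((n + 1 : ℕ) : ℝ) := by
  rw [setIntegral_indicator measurableSet_Iic, Ioi_inter_Iic,
    ← intervalIntegral.integral_of_le hR, integral_pow]
  simp

theorem integrableOn_Ioi_indicator_Iic_pow (R : ℝ) (n : ℕ) :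
    IntegrableOn ((Iic R).indicator fun r : ℝ => r ^ n) (Ioi 0) := by
  rw [IntegrableOn, integrable_indicator_iff measurableSet_Iic, IntegrableOn,
    Measure.restrict_restrict measurableSet_Iic, inter_comm, Ioi_inter_Iic]
  exact (continuous_pow n).integrableOn_Ioc

theorem sq_sqrt_mul_rpow_mul_pow_mul_exp_le {a b x y : ℝ} (ha : 0 ≤ a) (hb : 0 ≤ b) (hy : y ≤ 0)
    (k : ℕ) : (√a * b ^ ((k : ℝ) / 2) * x ^ k * exp y) ^ 2 ≤ a * b ^ k * x ^ (2 * k) := by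
  have hexp : exp y ^ 2 ≤ 1 := pow_le_one₀ (exp_pos y).le (exp_le_one_iff.2 hy)
  calc (√a * b ^ ((k : ℝ) / 2) * x ^ k * exp y) ^ 2
      = a * b ^ k * x ^ (2 * k) * exp y ^ 2 := by
        rw [mul_pow, mul_pow, sq_sqrt_mul_rpow_half ha hb, ← pow_mul, mul_comm k]
    _ ≤ a * b ^ k * x ^ (2 * k) :=
        mul_le_of_le_one_right (by have := (even_two_mul k).pow_nonneg x; positivity) hexp

theorem step_tail_nonneg {B₀ R r : ℝ} (hB₀ : 0 ≤ B₀) (hr : 0 ≤ r) :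
    0 ≤ if r < R then B₀ * (R ^ 2 - r ^ 2) / 2 else 0 := by
  split_ifs with h
  · have : r ^ 2 ≤ R ^ 2 := pow_le_pow_left₀ hr h.le 2
    nlinarith
  · exact le_rfl

theorem mul_step_tail_mul_inv_le {p A B₀ R r : ℝ} {k : ℕ} (hk : 1 ≤ k) (hr : 0 < r) (hA : 0 ≤ A)
    (hB₀ : 0 ≤ B₀) (hp : p ≤ A * r ^ (2 * k)) :
    p * (if r < R then B₀ * (R ^ 2 - r ^ 2) / 2 else 0) * r⁻¹
      ≤ A * (B₀ * R ^ 2 / 2) * (Iic R).indicator (fun r => r ^ (2 * k - 1)) r := by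
  split_ifs with h
  · have hrR : r ^ 2 ≤ R ^ 2 := pow_le_pow_left₀ hr.le h.le 2
    have htail : B₀ * (R ^ 2 - r ^ 2) / 2 ≤ B₀ * R ^ 2 / 2 := by nlinarith
    have htail₀ : 0 ≤ B₀ * (R ^ 2 - r ^ 2) / 2 := by nlinarith
    rw [indicator_of_mem (mem_Iic.2 h.le), pow_sub₀ r hr.ne' (by omega), pow_one]
    calc p * (B₀ * (R ^ 2 - r ^ 2) / 2) * r⁻¹ ≤ A * r ^ (2 * k) * (B₀ * R ^ 2 / 2) * r⁻¹ := by
          gcongr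
      _ = _ := by ring
  · rw [mul_zero, zero_mul, indicator_apply]
    split_ifs <;> positivity

/-- Estimates from the proof of Theorem 7.5 (thm-hole) for a magnetic perturbation supported
in a disc of radius `R` (a magnetic 'hole' of depth `B₀`): the flux equals `ωB₀R²/2`, and
`λ_k ≤ (ωB₀/Γ(k+1))(B₀R²/2)^{k+1}` for every `k ≥ 1`. -/
theorem compact_support_estimates
    (B₀ R ω : ℝ) (hB₀ : 0 < B₀) (hR : 0 < R) (hω : 0 ≤ ω)
    (g : ℝ → ℝ)
    (hg : ∀ r : ℝ, 0 < r → g r = if r ≤ R then B₀ else 0)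
    (ψ : ℕ → ℝ → ℝ)
    (hψ : ∀ (k : ℕ) (r : ℝ), ψ k r = Real.sqrt (B₀ / Real.Gamma ((k : ℝ) + 1))
        * (B₀ / 2) ^ ((k : ℝ) / 2) * r ^ k * Real.exp (-B₀ * r ^ 2 / 4))
    (lam : ℕ → ℝ)
    (hlam : ∀ k : ℕ, lam k = 2 * k * ω
        * ∫ r in Set.Ioi (0 : ℝ), ψ k r ^ 2 * (∫ s in Set.Ioi r, g s * s) * r⁻¹) :
    ω * (∫ r in Set.Ioi (0 : ℝ), g r * r) = ω * B₀ * R ^ 2 / 2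
      ∧ ∀ k : ℕ, 1 ≤ k →
        lam k ≤ ω * B₀ / Real.Gamma ((k : ℝ) + 1) * (B₀ * R ^ 2 / 2) ^ (k + 1) := by
  have tail (r : ℝ) (hr : 0 ≤ r) := setIntegral_Ioi_mul_self_of_eq_step hg hr
  refine ⟨by rw [tail 0 le_rfl, if_pos hR]; ring, fun k hk => ?_⟩
  have hΓ : 0 < Gamma ((k : ℝ) + 1) := Gamma_pos_of_pos (by positivity)
  set A := B₀ / Gamma ((k : ℝ) + 1) * (B₀ / 2) ^ k
  have hψ_sq (r : ℝ) : ψ k r ^ 2 ≤ A * r ^ (2 * k) := by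
    rw [hψ]
    exact sq_sqrt_mul_rpow_mul_pow_mul_exp_le (by positivity) (by positivity)
      (by nlinarith [sq_nonneg r]) k
  have hint : ∫ r in Ioi (0 : ℝ), ψ k r ^ 2 * (∫ s in Ioi r, g s * s) * r⁻¹
      ≤ A * (B₀ * R ^ 2 / 2) * (R ^ (2 * k) / ((2 * k : ℕ) : ℝ)) := by
    have h2k : 2 * k - 1 + 1 = 2 * k := by omega
    rw [← h2k, ← integral_indicator_Iic_pow hR.le, ← integral_const_mul]
    -- nonnegativity of the integrand spares us proving it integrable
    refine integral_mono_of_nonneg ?_ ((integrableOn_Ioi_indicator_Iic_pow R _).const_mul _) ?_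
    all_goals filter_upwards [self_mem_ae_restrict measurableSet_Ioi] with r (hr : 0 < r)
    · rw [tail r hr.le]
      exact mul_nonneg (mul_nonneg (sq_nonneg _) (step_tail_nonneg hB₀.le hr.le)) (by positivity)
    · rw [tail r hr.le]
      exact mul_step_tail_mul_inv_le hk hr (by positivity) hB₀.le (hψ_sq r)
  rw [hlam k]
  calc 2 * k * ω * ∫ r in Ioi (0 : ℝ), ψ k r ^ 2 * (∫ s in Ioi r, g s * s) * r⁻¹
      ≤ 2 * k * ω * (A * (B₀ * R ^ 2 / 2) * (R ^ (2 * k) / ((2 * k : ℕ) : ℝ))) := by gcongr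
    _ = ω * B₀ / Gamma ((k : ℝ) + 1) * (B₀ * R ^ 2 / 2) ^ (k + 1) := by
      have : (k : ℝ) ≠ 0 := by positivity
      simp only [A]
      push_cast
      field_simp
      ring
end
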